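/- arXiv:math/0605482 — 4 statements merged into one kernel-verified Lean document; each statement's English description precedes it below -/
import Mathlib

section
/- Let d ≥ 5. There exists a finite constant a_d depending only on d such that for every x ∈ ℝ^d, ∫_{ℝ^d} G(x,z) (|z|^{2−d} ∧ 1)^2 dz ≤ a_d (|x|^{2−d} ∧ 1). -/
open MeasureTheory ENNReal NNReal

noncomputable def greenC (d : ℕ) : ℝ :=
  Real.Gamma ((d : ℝ) / 2 - 1) / (2 * Real.pi ^ ((d : ℝ) / 2))

noncomputable def green (d : ℕ) (x y : EuclideanSpace ℝ (Fin d)) : ℝ :=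
  greenC d * ‖x - y‖ ^ ((2 : ℝ) - d)

/-!
Put `ρ = max ‖x‖ 1`, so that `min (‖x‖ ^ (2 - d)) 1 = ρ ^ (2 - d)`, and split the integral at the
ball `B(x, ρ/2)`. Off the ball the kernel is at most `(ρ/2) ^ (2 - d)`, and the squared profile
`max ‖z‖ 1 ^ (-2(d - 2))` is integrable because `2(d - 2) > d`. On the ball `max ‖z‖ 1 ≥ ρ/2`, so
the profile is at most `(ρ/2) ^ (-2(d - 2))`, while by homogeneity of Lebesgue measure
`∫_{B(x,r)} ‖x - z‖ ^ (2 - d) dz = c r ^ 2`; the product is `≲ ρ ^ (6 - 2d) ≤ ρ ^ (2 - d)`.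
-/

open Metric Set Module

namespace ENNReal

lemma rpow_neg_le_rpow_neg {x y : ℝ≥0∞} {p : ℝ} (hp : 0 ≤ p) (h : x ≤ y) :
    y ^ (-p) ≤ x ^ (-p) := by
  rw [rpow_neg, rpow_neg]
  gcongr

lemma div_two_rpow {a : ℝ≥0∞} (ha : a ≠ ∞) (c : ℝ) : (a / 2) ^ c = 2 ^ (-c) * a ^ c := by
  rw [div_eq_mul_inv, mul_rpow_of_ne_top ha (by simp), inv_rpow, ← rpow_neg, mul_comm]

lemma min_rpow_neg_one (a : ℝ≥0∞) {p : ℝ} (hp : 0 ≤ p) :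
    min (a ^ (-p)) 1 = max a 1 ^ (-p) := by
  have hanti : Antitone fun b : ℝ≥0∞ ↦ b ^ (-p) := fun _ _ h ↦ rpow_neg_le_rpow_neg hp h
  simpa only [one_rpow] using (hanti.map_max (a := a) (b := 1)).symm

/-- Only an inequality: at `a = 0`, `c < 0` the real power is the junk value `0`, the extended
one is `∞`. -/
lemma ofReal_rpow_le {a : ℝ} (ha : 0 ≤ a) (c : ℝ) :
    ENNReal.ofReal (a ^ c) ≤ ENNReal.ofReal a ^ c := by
  rcases ha.lt_or_eq with ha | rfl
  · exact (ofReal_rpow_of_pos ha).ge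
  rcases eq_or_ne c 0 with rfl | hc
  · simp
  · simp [Real.zero_rpow hc]

end ENNReal

section SeminormedAddCommGroup

variable {E : Type*} [SeminormedAddCommGroup E]

lemma half_max_norm_one_le_max_norm_one {x z : E} (h : ‖x - z‖ < max ‖x‖ 1 / 2) :
    max ‖x‖ 1 / 2 ≤ max ‖z‖ 1 := by
  have := norm_sub_norm_le x z
  rcases max_cases ‖x‖ 1 with ⟨hx, _⟩ | ⟨hx, _⟩ <;>
    rcases max_cases ‖z‖ 1 with ⟨hz, _⟩ | ⟨hz, _⟩ <;> linarith

lemma ofReal_max_norm_one_div_two (x : E) :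
    ENNReal.ofReal (max ‖x‖ 1 / 2) = max ‖x‖ₑ 1 / 2 := by
  rw [ofReal_div_of_pos two_pos, ofReal_max, ofReal_norm, ofReal_one, ofReal_ofNat]

end SeminormedAddCommGroup

lemma setLIntegral_compl_ball_enorm_sub_rpow_mul_max_rpow_le {E : Type*} [NormedAddCommGroup E]
    [MeasurableSpace E] [BorelSpace E] (μ : Measure E) {p q : ℝ} (hp : 0 ≤ p) (x : E) :
    ∫⁻ z in (ball x (max ‖x‖ 1 / 2))ᶜ, ‖x - z‖ₑ ^ (-p) * max ‖z‖ₑ 1 ^ (-q) ∂μ ≤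
      2 ^ p * (∫⁻ z, max ‖z‖ₑ 1 ^ (-q) ∂μ) * max ‖x‖ₑ 1 ^ (-p) := by
  set ρ := max ‖x‖ₑ 1
  have hkernel (z : E) (hz : z ∈ (ball x (max ‖x‖ 1 / 2))ᶜ) :
      ‖x - z‖ₑ ^ (-p) ≤ 2 ^ p * ρ ^ (-p) := by
    calc ‖x - z‖ₑ ^ (-p) ≤ (ρ / 2) ^ (-p) := by
          refine rpow_neg_le_rpow_neg hp ?_
          rw [← ofReal_max_norm_one_div_two, ← ofReal_norm]
          refine ofReal_le_ofReal ?_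
          simpa [dist_eq_norm, norm_sub_rev] using hz
      _ = 2 ^ p * ρ ^ (-p) := by
        rw [div_two_rpow (max_ne_top enorm_ne_top one_ne_top), neg_neg]
  calc _ ≤ ∫⁻ z in (ball x (max ‖x‖ 1 / 2))ᶜ, 2 ^ p * ρ ^ (-p) * max ‖z‖ₑ 1 ^ (-q) ∂μ :=
        setLIntegral_mono' measurableSet_ball.compl fun z hz ↦ mul_le_mul_left (hkernel z hz) _
    _ ≤ ∫⁻ z, 2 ^ p * ρ ^ (-p) * max ‖z‖ₑ 1 ^ (-q) ∂μ := setLIntegral_le_lintegral _ _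
    _ = 2 ^ p * (∫⁻ z, max ‖z‖ₑ 1 ^ (-q) ∂μ) * ρ ^ (-p) := by
        rw [lintegral_const_mul _ (by fun_prop)]
        ring

section RieszPotential

variable {E : Type*} [NormedAddCommGroup E] [NormedSpace ℝ E] [FiniteDimensional ℝ E]
  [MeasurableSpace E] [BorelSpace E] (μ : Measure E) [μ.IsAddHaarMeasure]

lemma setLIntegral_ball_enorm_sub_rpow (x : E) (R p : ℝ) :
    ∫⁻ z in ball x R, ‖x - z‖ₑ ^ p ∂μ = ∫⁻ y in ball 0 R, ‖y‖ₑ ^ p ∂μ := by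
  have hpre : (x - ·) ⁻¹' ball 0 R = ball x R := by
    ext z
    simp [dist_eq_norm, norm_sub_rev]
  rw [← hpre]
  exact (Measure.measurePreserving_sub_left μ x).setLIntegral_comp_preimage measurableSet_ball
    (f := fun y ↦ ‖y‖ₑ ^ p) (by fun_prop)

lemma setLIntegral_ball_zero_enorm_rpow {R : ℝ} (hR : 0 < R) (p : ℝ) :
    ∫⁻ y in ball 0 R, ‖y‖ₑ ^ p ∂μ =
      ENNReal.ofReal R ^ ((finrank ℝ E : ℝ) + p) * ∫⁻ y in ball 0 1, ‖y‖ₑ ^ p ∂μ := by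
  have hpre : (R • ·) ⁻¹' ball (0 : E) R = ball 0 1 := by
    ext u
    simp [norm_smul, abs_of_pos hR, hR]
  have hscale := setLIntegral_map (μ := μ) (measurableSet_ball (x := (0 : E)) (ε := R))
    (f := fun y ↦ ‖y‖ₑ ^ p) (by fun_prop) (measurable_const_smul R)
  simp only [Measure.map_addHaar_smul μ hR.ne', Measure.restrict_smul, lintegral_smul_measure,
    hpre, enorm_smul, mul_rpow_of_ne_top enorm_ne_top enorm_ne_top] at hscale
  have hR' : ‖R‖ₑ = ENNReal.ofReal R := by rw [← ofReal_norm, Real.norm_of_nonneg hR.le]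
  rw [lintegral_const_mul' _ _ (by simp [hR.ne'])] at hscale
  rw [hR', abs_of_pos (by positivity), ofReal_inv_of_pos (by positivity), ofReal_pow hR.le,
    smul_eq_mul] at hscale
  have hR0 : ENNReal.ofReal R ≠ 0 := by simp [hR]
  rw [rpow_add _ _ hR0 ofReal_ne_top, ENNReal.rpow_natCast, mul_assoc, ← hscale, ← mul_assoc,
    ENNReal.mul_inv_cancel (pow_ne_zero _ hR0) (pow_ne_top ofReal_ne_top), one_mul]

lemma setLIntegral_ball_zero_enorm_rpow_neg_lt_top {p : ℝ} (hp : 0 ≤ p)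
    (hpn : p < finrank ℝ E) : ∫⁻ y in ball 0 1, ‖y‖ₑ ^ (-p) ∂μ < ∞ := by
  have hn : 0 < finrank ℝ E := by exact_mod_cast hp.trans_lt hpn
  have : Nontrivial E := Module.nontrivial_of_finrank_pos hn
  have hint : IntegrableOn (fun y : E ↦ ‖y‖ ^ (-p)) (ball 0 1) μ :=
    integrableOn_ball_of_norm_le_rpow hn hpn (C := 1)
      (ae_of_all _ fun y ↦ by simp [Real.norm_of_nonneg (Real.rpow_nonneg (norm_nonneg y) _)])
      (measurable_norm.pow_const _).aestronglyMeasurable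
  refine lt_of_eq_of_lt (lintegral_congr_ae ?_) hint.hasFiniteIntegral
  filter_upwards [ae_restrict_of_ae (compl_mem_ae_iff.mpr (measure_singleton (0 : E)))]
    with y (hy : y ≠ 0)
  rw [Real.enorm_of_nonneg (Real.rpow_nonneg (norm_nonneg y) _),
    ← ofReal_rpow_of_pos (norm_pos_iff.mpr hy), ofReal_norm]

lemma lintegral_max_enorm_one_rpow_neg_lt_top {q : ℝ} (hq : finrank ℝ E < q) :
    ∫⁻ z, max ‖z‖ₑ 1 ^ (-q) ∂μ < ∞ := by
  have hq0 : 0 ≤ q := (Nat.cast_nonneg _).trans hq.le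
  have hle (z : E) : max ‖z‖ₑ 1 ^ (-q) ≤ 2 ^ q * ENNReal.ofReal ((1 + ‖z‖) ^ (-q)) := by
    have hhalf : (1 + ‖z‖ₑ) / 2 ≤ max ‖z‖ₑ 1 := by
      rw [ENNReal.div_le_iff (by norm_num) (by norm_num), mul_two]
      exact add_le_add (le_max_right _ _) (le_max_left _ _)
    calc max ‖z‖ₑ 1 ^ (-q) ≤ ((1 + ‖z‖ₑ) / 2) ^ (-q) := rpow_neg_le_rpow_neg hq0 hhalf
      _ = 2 ^ q * ENNReal.ofReal ((1 + ‖z‖) ^ (-q)) := by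
        rw [div_two_rpow (by simp), neg_neg, ← ofReal_rpow_of_pos (by positivity),
          ofReal_add zero_le_one (norm_nonneg z), ofReal_one, ofReal_norm]
  calc ∫⁻ z, max ‖z‖ₑ 1 ^ (-q) ∂μ ≤ ∫⁻ z, 2 ^ q * ENNReal.ofReal ((1 + ‖z‖) ^ (-q)) ∂μ :=
        lintegral_mono hle
    _ = 2 ^ q * ∫⁻ z, ENNReal.ofReal ((1 + ‖z‖) ^ (-q)) ∂μ :=
        lintegral_const_mul' _ _ (rpow_ne_top_of_nonneg hq0 ofNat_ne_top)
    _ < ∞ := mul_lt_top (rpow_lt_top_of_nonneg hq0 ofNat_ne_top) (finite_integral_one_add_norm hq)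

lemma setLIntegral_ball_enorm_sub_rpow_mul_max_rpow_le {p q : ℝ}
    (hq : (finrank ℝ E : ℝ) ≤ q) (x : E) :
    ∫⁻ z in ball x (max ‖x‖ 1 / 2), ‖x - z‖ₑ ^ (-p) * max ‖z‖ₑ 1 ^ (-q) ∂μ ≤
      2 ^ (p + q - finrank ℝ E) * (∫⁻ y in ball 0 1, ‖y‖ₑ ^ (-p) ∂μ) * max ‖x‖ₑ 1 ^ (-p) := by
  set ρ := max ‖x‖ₑ 1
  set n : ℝ := (finrank ℝ E : ℝ)
  have hρ1 : 1 ≤ ρ := le_max_right _ _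
  have hρ_half : ρ / 2 ≠ 0 := (ENNReal.div_pos (one_pos.trans_le hρ1).ne' ofNat_ne_top).ne'
  have hρtop : ρ ≠ ∞ := max_ne_top enorm_ne_top one_ne_top
  have hprofile (z : E) (hz : z ∈ ball x (max ‖x‖ 1 / 2)) :
      max ‖z‖ₑ 1 ^ (-q) ≤ (ρ / 2) ^ (-q) := by
    refine rpow_neg_le_rpow_neg ((Nat.cast_nonneg _).trans hq) ?_
    rw [← ofReal_max_norm_one_div_two, ← ofReal_norm, ← ofReal_one, ← ofReal_max]
    refine ofReal_le_ofReal (half_max_norm_one_le_max_norm_one ?_)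
    rwa [mem_ball, dist_eq_norm, norm_sub_rev] at hz
  calc _ ≤ ∫⁻ z in ball x (max ‖x‖ 1 / 2), ‖x - z‖ₑ ^ (-p) * (ρ / 2) ^ (-q) ∂μ :=
        setLIntegral_mono' measurableSet_ball fun z hz ↦ mul_le_mul_right (hprofile z hz) _
    _ = (ρ / 2) ^ (n - p) * (∫⁻ y in ball 0 1, ‖y‖ₑ ^ (-p) ∂μ) * (ρ / 2) ^ (-q) := by
        rw [lintegral_mul_const _ (by fun_prop), setLIntegral_ball_enorm_sub_rpow,
          setLIntegral_ball_zero_enorm_rpow μ (by positivity), ofReal_max_norm_one_div_two,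
          ← sub_eq_add_neg]
    _ = 2 ^ (p + q - n) * (∫⁻ y in ball 0 1, ‖y‖ₑ ^ (-p) ∂μ) * ρ ^ (n - p - q) := by
        rw [mul_right_comm, ← rpow_add _ _ hρ_half (div_ne_top hρtop two_ne_zero),
          div_two_rpow hρtop, show -(n - p + -q) = p + q - n by ring,
          show n - p + -q = n - p - q by ring]
        ring
    _ ≤ 2 ^ (p + q - n) * (∫⁻ y in ball 0 1, ‖y‖ₑ ^ (-p) ∂μ) * ρ ^ (-p) := by
        gcongr
        linarith

theorem lintegral_enorm_sub_rpow_mul_max_rpow_le {p q : ℝ} (hp : 0 ≤ p)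
    (hq : (finrank ℝ E : ℝ) ≤ q) (x : E) :
    ∫⁻ z, ‖x - z‖ₑ ^ (-p) * max ‖z‖ₑ 1 ^ (-q) ∂μ ≤
      (2 ^ (p + q - finrank ℝ E) * (∫⁻ y in ball 0 1, ‖y‖ₑ ^ (-p) ∂μ) +
        2 ^ p * ∫⁻ z, max ‖z‖ₑ 1 ^ (-q) ∂μ) * max ‖x‖ₑ 1 ^ (-p) := by
  rw [← lintegral_add_compl _ (measurableSet_ball (x := x) (ε := max ‖x‖ 1 / 2)), add_mul]
  exact add_le_add (setLIntegral_ball_enorm_sub_rpow_mul_max_rpow_le μ hq x)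
    (setLIntegral_compl_ball_enorm_sub_rpow_mul_max_rpow_le μ hp x)

theorem exists_lintegral_enorm_sub_rpow_mul_max_rpow_le {p q : ℝ} (hp : 0 ≤ p)
    (hpn : p < finrank ℝ E) (hq : finrank ℝ E < q) :
    ∃ C ≠ ∞, ∀ x : E,
      ∫⁻ z, ‖x - z‖ₑ ^ (-p) * max ‖z‖ₑ 1 ^ (-q) ∂μ ≤ C * max ‖x‖ₑ 1 ^ (-p) := by
  refine ⟨_, ?_, lintegral_enorm_sub_rpow_mul_max_rpow_le μ hp hq.le⟩
  have h2 (c : ℝ) (hc : 0 ≤ c) : (2 : ℝ≥0∞) ^ c ≠ ∞ := rpow_ne_top_of_nonneg hc ofNat_ne_top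
  refine add_ne_top.mpr ⟨mul_ne_top (h2 _ (by linarith)) ?_, mul_ne_top (h2 _ hp) ?_⟩
  · exact (setLIntegral_ball_zero_enorm_rpow_neg_lt_top μ hp hpn).ne
  · exact (lintegral_max_enorm_one_rpow_neg_lt_top μ hq).ne

end RieszPotential

lemma ofReal_green_le (d : ℕ) (x z : EuclideanSpace ℝ (Fin d)) :
    ENNReal.ofReal (green d x z) ≤ ENNReal.ofReal (greenC d) * ‖x - z‖ₑ ^ ((2 : ℝ) - d) := by
  rw [green, ofReal_mul' (Real.rpow_nonneg (norm_nonneg _) _), ← ofReal_norm]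
  exact mul_le_mul_right (ofReal_rpow_le (norm_nonneg _) _) _

/-- for `d ≥ 5`, there is a finite constant `a_d` depending only on `d`
such that `∫ G(x,z) (|z|^{2−d} ∧ 1)² dz ≤ a_d (|x|^{2−d} ∧ 1)` for every `x`. -/
theorem convolution_bound (d : ℕ) (hd : 5 ≤ d) :
    ∃ a : ℝ≥0, ∀ x : EuclideanSpace ℝ (Fin d),
      (∫⁻ z, ENNReal.ofReal (green d x z) *
          (min ((ENNReal.ofReal ‖z‖) ^ ((2 : ℝ) - d)) 1) ^ 2)
        ≤ (a : ℝ≥0∞) * min ((ENNReal.ofReal ‖x‖) ^ ((2 : ℝ) - d)) 1 := by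
  have hd' : (5 : ℝ) ≤ d := by exact_mod_cast hd
  have hdim : (finrank ℝ (EuclideanSpace ℝ (Fin d)) : ℝ) = d := by
    rw [finrank_euclideanSpace_fin]
  have h2d : (2 : ℝ) - d = -(d - 2) := by ring
  obtain ⟨C, hC, hbound⟩ := exists_lintegral_enorm_sub_rpow_mul_max_rpow_le
    (volume : Measure (EuclideanSpace ℝ (Fin d))) (p := d - 2) (q := (d - 2) * (2 : ℕ))
    (by linarith) (by rw [hdim]; linarith) (by rw [hdim]; push_cast; linarith)
  refine ⟨(ENNReal.ofReal (greenC d) * C).toNNReal, fun x ↦ ?_⟩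
  rw [coe_toNNReal (mul_ne_top ofReal_ne_top hC), ofReal_norm, h2d,
    min_rpow_neg_one _ (by linarith), mul_assoc]
  calc _ ≤ ∫⁻ z, ENNReal.ofReal (greenC d) *
          (‖x - z‖ₑ ^ (-(d - 2 : ℝ)) * max ‖z‖ₑ 1 ^ (-((d - 2 : ℝ) * (2 : ℕ)))) :=
        lintegral_mono fun z ↦ ?_
    _ = ENNReal.ofReal (greenC d) *
          ∫⁻ z, ‖x - z‖ₑ ^ (-(d - 2 : ℝ)) * max ‖z‖ₑ 1 ^ (-((d - 2 : ℝ) * (2 : ℕ))) :=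
        lintegral_const_mul' _ _ ofReal_ne_top
    _ ≤ _ := mul_le_mul_right (hbound x) _
  rw [ofReal_norm, min_rpow_neg_one _ (by linarith), ← neg_mul, ENNReal.rpow_mul_natCast,
    ← mul_assoc]
  exact mul_le_mul_left (h2d ▸ ofReal_green_le d x z) _
end

section
/- Let d ≥ 5 and let φ be a measurable function on ℝ^d with 0 ≤ φ ≤ 1 and φ = 0 outside B_1. Then there exists a finite constant K_d depending only on d such that for every x ∈ ℝ^d and every integer p ≥ 1, M_p^φ(x) ≤ K_d^p · p! · (|x|^{2−d} ∧ 1). -/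
/-!
Write `h(x) = |x|^{2-d} ∧ 1`. Since `φ ≤ 1_{B_1} ≤ h²`, everything rests on the estimate
`∫ |x - z|^{2-d} h(z)² dz ≤ c h(x)`, which needs `h² = |z|^{4-2d} ∧ 1` to be integrable, i.e.
`d > 4`. Split the integral at the ball of radius `R = max(|x|/2, 1)` around `x`: inside it
`|z| ≥ R`, so by scaling that part is at most `R^{4-2d} · R^2 ≤ R^{2-d}`; outside it the kernel is
at most `R^{2-d}`. Then `M_p ≤ A_p h` by induction, where `A_1 = c` and
`A_p = c ∑ C(p,j) A_j A_{p-j}`; the numbers `A_p / (c^{2p-1} p!)` satisfy the Catalan recursion,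
so `A_p ≤ c^{2p-1} 4^{p-1} p!`.
-/

open MeasureTheory ENNReal NNReal

noncomputable def M (d : ℕ) (φ : EuclideanSpace ℝ (Fin d) → ℝ) :
    ℕ → EuclideanSpace ℝ (Fin d) → ℝ≥0∞
  | 0 => fun _ => 0
  | 1 => fun x => ∫⁻ y, ENNReal.ofReal (green d x y) * ENNReal.ofReal (φ y)
  | (p + 2) => fun x =>
      ∑ j ∈ (Finset.Icc 1 (p + 1)).attach,
        ((p + 2).choose j.1 : ℝ≥0∞) *
          ∫⁻ z, ENNReal.ofReal (green d x z) * M d φ j.1 z * M d φ (p + 2 - j.1) z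
  termination_by p => p
  decreasing_by
  · have := Finset.mem_Icc.mp j.2; omega
  · have := Finset.mem_Icc.mp j.2; omega

open Metric Module

theorem le_max_norm_one_of_mem_ball {E : Type*} [NormedAddCommGroup E] {x z : E}
    (hz : z ∈ ball x (max (‖x‖ / 2) 1)) : max (‖x‖ / 2) 1 ≤ max ‖z‖ 1 := by
  have := norm_sub_norm_le x z
  rw [mem_ball, dist_eq_norm'] at hz
  rcases le_total (‖x‖ / 2) 1 with h | h
  · simp [h]
  · rw [max_eq_left h] at hz ⊢
    exact le_max_of_le_left (by linarith)

section Riesz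

variable {E : Type*} [NormedAddCommGroup E] [MeasurableSpace E] [BorelSpace E] (μ : Measure E)

theorem lintegral_rpow_norm_sub_mul_le (x : E) {r R : ℝ} (hr : r ≤ 0) (hR : 0 < R)
    {w : E → ℝ≥0∞} {B : ℝ≥0∞} (hB : ∀ z ∈ ball x R, w z ≤ B) :
    ∫⁻ z, ENNReal.ofReal (‖x - z‖ ^ r) * w z ∂μ ≤
      B * ∫⁻ z in ball x R, ENNReal.ofReal (‖x - z‖ ^ r) ∂μ +
        ENNReal.ofReal (R ^ r) * ∫⁻ z, w z ∂μ := by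
  rw [← lintegral_add_compl _ measurableSet_ball]
  gcongr ?_ + ?_
  · calc ∫⁻ z in ball x R, ENNReal.ofReal (‖x - z‖ ^ r) * w z ∂μ
        ≤ ∫⁻ z in ball x R, ENNReal.ofReal (‖x - z‖ ^ r) * B ∂μ :=
          setLIntegral_mono' measurableSet_ball fun z hz => by gcongr; exact hB z hz
      _ = B * ∫⁻ z in ball x R, ENNReal.ofReal (‖x - z‖ ^ r) ∂μ := by
          rw [lintegral_mul_const _ (by fun_prop), mul_comm]
  · calc ∫⁻ z in (ball x R)ᶜ, ENNReal.ofReal (‖x - z‖ ^ r) * w z ∂μ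
        ≤ ∫⁻ z in (ball x R)ᶜ, ENNReal.ofReal (R ^ r) * w z ∂μ := by
          refine setLIntegral_mono' measurableSet_ball.compl fun z hz => ?_
          have hRz : R ≤ ‖x - z‖ := by simpa [dist_eq_norm'] using hz
          gcongr ?_ * _
          exact ENNReal.ofReal_le_ofReal (Real.rpow_le_rpow_of_nonpos hR hRz hr)
      _ ≤ ENNReal.ofReal (R ^ r) * ∫⁻ z, w z ∂μ := by
          rw [lintegral_const_mul' _ _ ofReal_ne_top]
          gcongr _ * ?_
          exact setLIntegral_le_lintegral _ _

variable [NormedSpace ℝ E] [FiniteDimensional ℝ E] [μ.IsAddHaarMeasure]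

theorem setLIntegral_ball_rpow_norm_sub (x : E) (r : ℝ) {R : ℝ} (hR : 0 < R) :
    ∫⁻ z in ball x R, ENNReal.ofReal (‖x - z‖ ^ r) ∂μ =
      ENNReal.ofReal (R ^ finrank ℝ E * R ^ r) * ∫⁻ z in ball 0 1, ENNReal.ofReal (‖z‖ ^ r) ∂μ := by
  set f : E → ℝ≥0∞ := fun z => ENNReal.ofReal (‖z‖ ^ r)
  have htrans : ∫⁻ z in ball x R, f (z - x) ∂μ = ∫⁻ z in ball 0 R, f z ∂μ := by
    rw [← lintegral_indicator measurableSet_ball, ← lintegral_indicator measurableSet_ball,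
      ← lintegral_sub_right_eq_self ((ball 0 R).indicator f) x]
    congr with z
    simp [Set.indicator, dist_eq_norm]
  have hpre : (R • · : E → E) ⁻¹' ball 0 R = ball 0 1 := by
    ext u
    simp [norm_smul, abs_of_pos hR, hR]
  have hscale := setLIntegral_map (μ := μ) (f := f) (g := (R • ·)) (s := ball 0 R) measurableSet_ball
    (by fun_prop) (by fun_prop)
  rw [Measure.map_addHaar_smul μ hR.ne', hpre, setLIntegral_smul_measure] at hscale
  simp only [f, norm_smul, Real.norm_of_nonneg hR.le, Real.mul_rpow hR.le (norm_nonneg _),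
    ENNReal.ofReal_mul (Real.rpow_nonneg hR.le _), lintegral_const_mul' _ _ ofReal_ne_top,
    smul_eq_mul, abs_of_pos (inv_pos.2 (pow_pos hR _)), ENNReal.ofReal_inv_of_pos (pow_pos hR _)]
    at hscale
  simp_rw [norm_sub_rev x]
  change ∫⁻ z in ball x R, f (z - x) ∂μ = _
  rw [htrans, ENNReal.ofReal_mul (by positivity), mul_assoc, ← hscale, ← mul_assoc,
    ENNReal.mul_inv_cancel (by simpa using pow_pos hR _) ofReal_ne_top, one_mul]

theorem setLIntegral_unitBall_rpow_norm_lt_top [Nontrivial E] {r : ℝ}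
    (hr : -(finrank ℝ E : ℝ) < r) :
    ∫⁻ z in ball 0 1, ENNReal.ofReal (‖z‖ ^ r) ∂μ < ∞ := by
  refine IntegrableOn.setLIntegral_lt_top ((integrableOn_fun_norm_addHaar μ (f := (· ^ r))).2 ?_)
  have hn : 1 ≤ finrank ℝ E := Module.finrank_pos
  refine ((intervalIntegral.integrableOn_Ioo_rpow_iff (s := ((finrank ℝ E - 1 : ℕ) : ℝ) + r)
    zero_lt_one).2 ?_).congr_fun (fun y hy => ?_) measurableSet_Ioo
  · push_cast [hn]; linarith
  · simp only [smul_eq_mul, Real.rpow_add hy.1, Real.rpow_natCast]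

theorem lintegral_max_norm_one_rpow_lt_top {s : ℝ} (hs : s < -(finrank ℝ E : ℝ)) :
    ∫⁻ z, ENNReal.ofReal (max ‖z‖ 1 ^ s) ∂μ < ∞ := by
  have hle : ∀ z : E, max ‖z‖ 1 ^ s ≤ 2 ^ (-s) * (1 + ‖z‖) ^ s := by
    intro z
    have h2 : (1 + ‖z‖) ^ s ≥ (2 * max ‖z‖ 1) ^ s := by
      apply Real.rpow_le_rpow_of_nonpos (by positivity) _ (by linarith [(finrank ℝ E).cast_nonneg (α := ℝ)])
      linarith [le_max_left ‖z‖ 1, le_max_right ‖z‖ 1, norm_nonneg z]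
    rw [Real.mul_rpow (by norm_num) (by positivity)] at h2
    rw [Real.rpow_neg (by norm_num)]
    exact (le_inv_mul_iff₀ (by positivity)).2 h2
  calc ∫⁻ z, ENNReal.ofReal (max ‖z‖ 1 ^ s) ∂μ
      ≤ ∫⁻ z, ENNReal.ofReal (2 ^ (-s)) * ENNReal.ofReal ((1 + ‖z‖) ^ (-(-s))) ∂μ := by
        refine lintegral_mono fun z => ?_
        rw [neg_neg, ← ENNReal.ofReal_mul (by positivity)]
        exact ENNReal.ofReal_le_ofReal (hle z)
    _ < ∞ := by
        rw [lintegral_const_mul' _ _ ofReal_ne_top]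
        exact ENNReal.mul_lt_top ofReal_lt_top (finite_integral_one_add_norm (by linarith))

theorem exists_lintegral_rpow_norm_sub_mul_max_rpow_le [Nontrivial E] {r s : ℝ} (hr₀ : r ≤ 0)
    (hr : -(finrank ℝ E : ℝ) < r) (hs : s < -(finrank ℝ E : ℝ)) :
    ∃ C : ℝ≥0, ∀ x : E, ∫⁻ z, ENNReal.ofReal (‖x - z‖ ^ r) * ENNReal.ofReal (max ‖z‖ 1 ^ s) ∂μ ≤
      C * ENNReal.ofReal (max ‖x‖ 1 ^ r) := by
  set I := ∫⁻ z in ball 0 1, ENNReal.ofReal (‖z‖ ^ r) ∂μ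
  set W := ∫⁻ z, ENNReal.ofReal (max ‖z‖ 1 ^ s) ∂μ
  have hIW : I + W ≠ ∞ := ENNReal.add_ne_top.2
    ⟨(setLIntegral_unitBall_rpow_norm_lt_top μ hr).ne, (lintegral_max_norm_one_rpow_lt_top μ hs).ne⟩
  refine ⟨(I + W).toNNReal * ((2 : ℝ) ^ (-r)).toNNReal, fun x => ?_⟩
  set R := max (‖x‖ / 2) 1
  have hR₁ : 1 ≤ R := le_max_right _ _
  have hR : 0 < R := by linarith
  have hB : ∀ z ∈ ball x R, ENNReal.ofReal (max ‖z‖ 1 ^ s) ≤ ENNReal.ofReal (R ^ s) := by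
    intro z hz
    exact ENNReal.ofReal_le_ofReal
      (Real.rpow_le_rpow_of_nonpos hR (le_max_norm_one_of_mem_ball hz) (by linarith))
  have hRs : R ^ s * R ^ finrank ℝ E ≤ 1 :=
    calc R ^ s * R ^ finrank ℝ E ≤ R ^ (-(finrank ℝ E : ℝ)) * R ^ (finrank ℝ E : ℝ) := by
          rw [Real.rpow_natCast]
          gcongr
      _ = 1 := by rw [← Real.rpow_add hR, neg_add_cancel, Real.rpow_zero]
  have hRx : R ^ r ≤ 2 ^ (-r) * max ‖x‖ 1 ^ r := by
    have h2R : max ‖x‖ 1 ≤ 2 * R := by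
      rw [max_le_iff]; constructor <;> linarith [le_max_left (‖x‖ / 2) 1]
    have := Real.rpow_le_rpow_of_nonpos (by positivity) h2R hr₀
    rw [Real.mul_rpow (by norm_num) hR.le] at this
    rw [Real.rpow_neg (by norm_num)]
    exact (le_inv_mul_iff₀ (by positivity)).2 this
  calc ∫⁻ z, ENNReal.ofReal (‖x - z‖ ^ r) * ENNReal.ofReal (max ‖z‖ 1 ^ s) ∂μ
      ≤ ENNReal.ofReal (R ^ s) * (ENNReal.ofReal (R ^ finrank ℝ E * R ^ r) * I) +
          ENNReal.ofReal (R ^ r) * W := by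
        rw [← setLIntegral_ball_rpow_norm_sub μ x r hR]
        exact lintegral_rpow_norm_sub_mul_le μ x hr₀ hR hB
    _ ≤ ENNReal.ofReal (R ^ r) * (I + W) := by
        rw [← mul_assoc, ← ENNReal.ofReal_mul (by positivity), mul_add]
        gcongr
        nlinarith [Real.rpow_nonneg hR.le r]
    _ ≤ ENNReal.ofReal (2 ^ (-r) * max ‖x‖ 1 ^ r) * (I + W) := by gcongr
    _ = _ := by
        rw [ENNReal.ofReal_mul (by positivity), ENNReal.coe_mul, ENNReal.coe_toNNReal hIW]
        rw [ENNReal.ofReal, ENNReal.ofReal]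
        ring

end Riesz

theorem sum_Icc_one_eq_sum_range {β : Type*} [AddCommMonoid β] (f : ℕ → β) (q : ℕ) :
    ∑ j ∈ Finset.Icc 1 (q + 1), f j = ∑ i ∈ Finset.range (q + 1), f (i + 1) := by
  rw [Finset.range_eq_Ico, Finset.sum_Ico_add']
  rfl

theorem catalan_succ_eq_sum_range (q : ℕ) :
    catalan (q + 1) = ∑ i ∈ Finset.range (q + 1), catalan i * catalan (q - i) := by
  rw [catalan_succ, Fin.sum_univ_eq_sum_range (fun i => catalan i * catalan (q - i))]

theorem catalan_le_four_pow (n : ℕ) : catalan n ≤ 4 ^ n := by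
  rw [catalan_eq_centralBinom_div]
  exact (Nat.div_le_self _ _).trans (Nat.centralBinom_le_four_pow n)

theorem pow_mul_catalan_le {c : ℝ≥0∞} (hc : 1 ≤ c) (p : ℕ) :
    c ^ (2 * p + 1) * catalan p ≤ (4 * c ^ 2) ^ (p + 1) := by
  calc c ^ (2 * p + 1) * catalan p ≤ c ^ (2 * (p + 1)) * 4 ^ (p + 1) := by
        gcongr ?_ * ?_
        · exact pow_le_pow_right₀ hc (by omega)
        · exact_mod_cast (catalan_le_four_pow p).trans (Nat.pow_le_pow_right (by norm_num) p.le_succ)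
    _ = (4 * c ^ 2) ^ (p + 1) := by ring

section Moments

variable {d : ℕ} {φ : EuclideanSpace ℝ (Fin d) → ℝ} {h : EuclideanSpace ℝ (Fin d) → ℝ≥0∞}
  {c : ℝ≥0}

theorem lintegral_green_mul_mul_le
    (hG : ∀ x, ∫⁻ z, ENNReal.ofReal (green d x z) * (h z * h z) ≤ c * h x)
    {f g : EuclideanSpace ℝ (Fin d) → ℝ≥0∞} {a b : ℝ≥0∞} (ha : a ≠ ∞) (hb : b ≠ ∞)
    (hf : ∀ z, f z ≤ a * h z) (hg : ∀ z, g z ≤ b * h z) (x : EuclideanSpace ℝ (Fin d)) :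
    ∫⁻ z, ENNReal.ofReal (green d x z) * f z * g z ≤ a * b * (c * h x) :=
  calc ∫⁻ z, ENNReal.ofReal (green d x z) * f z * g z
      ≤ ∫⁻ z, a * b * (ENNReal.ofReal (green d x z) * (h z * h z)) :=
        lintegral_mono fun z => calc
          ENNReal.ofReal (green d x z) * f z * g z
              ≤ ENNReal.ofReal (green d x z) * (a * h z) * (b * h z) := by
                gcongr
                exacts [hf z, hg z]
          _ = a * b * (ENNReal.ofReal (green d x z) * (h z * h z)) := by ring
    _ ≤ a * b * (c * h x) := by
        rw [lintegral_const_mul' _ _ (ENNReal.mul_ne_top ha hb)]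
        gcongr
        exact hG x

theorem choose_mul_moment_coeff_eq (c : ℝ≥0∞) {i q : ℕ} (hiq : i ≤ q) :
    ((q + 2).choose (i + 1) : ℝ≥0∞) *
        ((c ^ (2 * i + 1) * catalan i * (i + 1).factorial) *
          (c ^ (2 * (q - i) + 1) * catalan (q - i) * (q - i + 1).factorial) * c) =
      c ^ (2 * (q + 1) + 1) * (q + 2).factorial * (catalan i * catalan (q - i)) := by
  have hfact : ((q + 2).choose (i + 1) * (i + 1).factorial * (q - i + 1).factorial : ℝ≥0∞) =
      (q + 2).factorial := by
    rw [show q - i + 1 = q + 2 - (i + 1) by omega]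
    exact_mod_cast Nat.choose_mul_factorial_mul_factorial (by omega)
  have hpow : c ^ (2 * i + 1) * c ^ (2 * (q - i) + 1) * c = c ^ (2 * (q + 1) + 1) := by
    rw [← pow_add, ← pow_succ]
    congr 1
    omega
  rw [← hfact, ← hpow]
  ring

theorem M_succ_le (hφ : ∀ y, ENNReal.ofReal (φ y) ≤ h y * h y)
    (hG : ∀ x, ∫⁻ z, ENNReal.ofReal (green d x z) * (h z * h z) ≤ c * h x) (p : ℕ)
    (x : EuclideanSpace ℝ (Fin d)) :
    M d φ (p + 1) x ≤ c ^ (2 * p + 1) * catalan p * (p + 1).factorial * h x := by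
  induction p using Nat.strong_induction_on generalizing x with
  | _ p ih =>
  rcases p with _ | q
  · calc M d φ 1 x ≤ ∫⁻ z, ENNReal.ofReal (green d x z) * (h z * h z) := by
          rw [M]
          exact lintegral_mono fun z => by gcongr; exact hφ z
      _ ≤ c * h x := hG x
      _ = _ := by simp
  have hterm : ∀ i ∈ Finset.range (q + 1),
      ((q + 2).choose (i + 1) : ℝ≥0∞) *
        ∫⁻ z, ENNReal.ofReal (green d x z) * M d φ (i + 1) z * M d φ (q + 2 - (i + 1)) z ≤
      c ^ (2 * (q + 1) + 1) * (q + 2).factorial * (catalan i * catalan (q - i)) * h x := by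
    intro i hi
    have hiq : i ≤ q := Nat.lt_succ_iff.1 (Finset.mem_range.1 hi)
    rw [show q + 2 - (i + 1) = q - i + 1 by omega]
    calc ((q + 2).choose (i + 1) : ℝ≥0∞) *
          ∫⁻ z, ENNReal.ofReal (green d x z) * M d φ (i + 1) z * M d φ (q - i + 1) z
        ≤ (q + 2).choose (i + 1) * ((c ^ (2 * i + 1) * catalan i * (i + 1).factorial) *
            (c ^ (2 * (q - i) + 1) * catalan (q - i) * (q - i + 1).factorial) * (c * h x)) := by
          gcongr
          exact lintegral_green_mul_mul_le hG (by finiteness) (by finiteness)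
            (ih i (by omega)) (ih (q - i) (by omega)) x
      _ = _ := by
          rw [← choose_mul_moment_coeff_eq _ hiq]
          ring
  calc M d φ (q + 1 + 1) x
      = ∑ i ∈ Finset.range (q + 1), ((q + 2).choose (i + 1) : ℝ≥0∞) *
          ∫⁻ z, ENNReal.ofReal (green d x z) * M d φ (i + 1) z * M d φ (q + 2 - (i + 1)) z := by
        rw [M]
        beta_reduce
        rw [Finset.sum_attach (Finset.Icc 1 (q + 1)) (fun j => ((q + 2).choose j : ℝ≥0∞) *
          ∫⁻ z, ENNReal.ofReal (green d x z) * M d φ j z * M d φ (q + 2 - j) z),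
          sum_Icc_one_eq_sum_range]
    _ ≤ ∑ i ∈ Finset.range (q + 1),
          c ^ (2 * (q + 1) + 1) * (q + 2).factorial * (catalan i * catalan (q - i)) * h x :=
        Finset.sum_le_sum hterm
    _ = _ := by
        rw [← Finset.sum_mul, ← Finset.mul_sum, catalan_succ_eq_sum_range]
        push_cast
        ring

end Moments

theorem ofReal_green (d : ℕ) (x y : EuclideanSpace ℝ (Fin d)) :
    ENNReal.ofReal (green d x y) =
      ENNReal.ofReal (greenC d) * ENNReal.ofReal (‖x - y‖ ^ ((2 : ℝ) - d)) :=
  ENNReal.ofReal_mul' (Real.rpow_nonneg (norm_nonneg _) _)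

theorem min_ofReal_rpow_one {t r : ℝ} (hr : r ≤ 0) :
    min (ENNReal.ofReal t ^ r) 1 = ENNReal.ofReal (max t 1 ^ r) := by
  rcases le_total t 1 with h | h
  · rw [max_eq_right h, Real.one_rpow, ENNReal.ofReal_one, min_eq_right]
    rw [← neg_neg r, ENNReal.rpow_neg, ENNReal.one_le_inv]
    exact ENNReal.rpow_le_one (ENNReal.ofReal_le_one.2 h) (neg_nonneg.2 hr)
  · rw [max_eq_left h, ENNReal.ofReal_rpow_of_pos (by linarith), min_eq_left]
    exact ENNReal.ofReal_le_one.2 (Real.rpow_le_one_of_one_le_of_nonpos h hr)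

theorem exists_lintegral_green_mul_le {d : ℕ} (hd : 5 ≤ d) :
    ∃ c : ℝ≥0, 1 ≤ c ∧ ∀ x : EuclideanSpace ℝ (Fin d),
      ∫⁻ z, ENNReal.ofReal (green d x z) *
          (ENNReal.ofReal (max ‖z‖ 1 ^ ((2 : ℝ) - d)) * ENNReal.ofReal (max ‖z‖ 1 ^ ((2 : ℝ) - d)))
        ≤ c * ENNReal.ofReal (max ‖x‖ 1 ^ ((2 : ℝ) - d)) := by
  have : Nonempty (Fin d) := ⟨⟨0, by omega⟩⟩
  have hd' : (5 : ℝ) ≤ d := by exact_mod_cast hd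
  obtain ⟨C, hC⟩ := exists_lintegral_rpow_norm_sub_mul_max_rpow_le
    (volume : Measure (EuclideanSpace ℝ (Fin d))) (r := 2 - d) (s := (2 - d) + (2 - d))
    (by linarith) (by rw [finrank_euclideanSpace_fin]; linarith)
    (by rw [finrank_euclideanSpace_fin]; linarith)
  refine ⟨max ((greenC d).toNNReal * C) 1, le_max_right _ _, fun x => ?_⟩
  calc ∫⁻ z, ENNReal.ofReal (green d x z) *
          (ENNReal.ofReal (max ‖z‖ 1 ^ ((2 : ℝ) - d)) * ENNReal.ofReal (max ‖z‖ 1 ^ ((2 : ℝ) - d)))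
      = ENNReal.ofReal (greenC d) * ∫⁻ z, ENNReal.ofReal (‖x - z‖ ^ ((2 : ℝ) - d)) *
          ENNReal.ofReal (max ‖z‖ 1 ^ ((2 - d) + (2 - d) : ℝ)) := by
        rw [← lintegral_const_mul' _ _ ofReal_ne_top]
        congr with z
        rw [ofReal_green, Real.rpow_add (lt_max_of_lt_right one_pos),
          ENNReal.ofReal_mul (by positivity)]
        ring
    _ ≤ ENNReal.ofReal (greenC d) * (C * ENNReal.ofReal (max ‖x‖ 1 ^ ((2 : ℝ) - d))) := by
        gcongr
        exact hC x
    _ ≤ _ := by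
        rw [← mul_assoc]
        gcongr
        rw [ENNReal.ofReal, ← ENNReal.coe_mul, ENNReal.coe_le_coe]
        exact le_max_left _ _

theorem moment_bound_high_dim_general (d : ℕ) (hd : 5 ≤ d)
    (φ : EuclideanSpace ℝ (Fin d) → ℝ) (hφ_le_one : ∀ y, φ y ≤ 1)
    (hφ_supp : ∀ y, y ∉ Metric.ball (0 : EuclideanSpace ℝ (Fin d)) 1 → φ y = 0) :
    ∃ K : ℝ≥0, ∀ (x : EuclideanSpace ℝ (Fin d)) (p : ℕ), 1 ≤ p →
      M d φ p x ≤ (K : ℝ≥0∞) ^ p * (p.factorial : ℝ≥0∞) *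
        min ((ENNReal.ofReal ‖x‖) ^ ((2 : ℝ) - d)) 1 := by
  obtain ⟨c, hc, hG⟩ := exists_lintegral_green_mul_le hd
  have hφ : ∀ y : EuclideanSpace ℝ (Fin d), ENNReal.ofReal (φ y) ≤
      ENNReal.ofReal (max ‖y‖ 1 ^ ((2 : ℝ) - d)) * ENNReal.ofReal (max ‖y‖ 1 ^ ((2 : ℝ) - d)) := by
    intro y
    by_cases hy : y ∈ ball 0 1
    · rw [max_eq_right (mem_ball_zero_iff.1 hy).le]
      simpa using hφ_le_one y
    · simp [hφ_supp y hy]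
  refine ⟨4 * c ^ 2, fun x p hp => ?_⟩
  obtain ⟨p, rfl⟩ := Nat.exists_eq_add_of_le' hp
  have hr : (2 : ℝ) - d ≤ 0 := by
    have : (5 : ℝ) ≤ d := by exact_mod_cast hd
    linarith
  rw [min_ofReal_rpow_one hr]
  calc M d φ (p + 1) x
      ≤ c ^ (2 * p + 1) * catalan p * (p + 1).factorial * ENNReal.ofReal (max ‖x‖ 1 ^ ((2 : ℝ) - d)) :=
        M_succ_le hφ hG p x
    _ ≤ _ := by
        gcongr
        exact_mod_cast pow_mul_catalan_le (ENNReal.one_le_coe_iff.2 hc) p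

/-- Lemma 2 of the paper: for `d ≥ 5` and `0 ≤ φ ≤ 1` supported in `B_1`,
there is a finite constant `K_d` with `M_p^φ(x) ≤ K_d^p p! (|x|^{2−d} ∧ 1)`. -/
theorem moment_bound_high_dim (d : ℕ) (hd : 5 ≤ d)
    (φ : EuclideanSpace ℝ (Fin d) → ℝ) (hφ_meas : Measurable φ)
    (hφ_nonneg : ∀ y, 0 ≤ φ y) (hφ_le_one : ∀ y, φ y ≤ 1)
    (hφ_supp : ∀ y, y ∉ Metric.ball (0 : EuclideanSpace ℝ (Fin d)) 1 → φ y = 0) :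
    ∃ K : ℝ≥0, ∀ (x : EuclideanSpace ℝ (Fin d)) (p : ℕ), 1 ≤ p →
      M d φ p x ≤ (K : ℝ≥0∞) ^ p * (p.factorial : ℝ≥0∞) *
        min ((ENNReal.ofReal ‖x‖) ^ ((2 : ℝ) - d)) 1 :=
  moment_bound_high_dim_general d hd φ hφ_le_one hφ_supp
end

section
/- Let d = 4 and suppose that for each ε ∈ (0,1), u_ε is a nonnegative twice continuously differentiable function on the domain {x ∈ ℝ^4 : |x| > ε} satisfying Δu_ε = 2 u_ε² on this domain, u_ε(x) → ∞ as |x| → ε+, and u_ε(x) → 0 as |x| → ∞. Then for every fixed x ∈ ℝ^4 \ {0}, u_ε(x) ∼ |x|^{−2} (log(1/ε))^{−1} as ε → 0; that is, (log(1/ε)) · u_ε(x) converges to |x|^{−2}. -/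
/-!
Comparison with explicit radial barriers. On `ℝ⁴` the Laplacian of `y ↦ A (‖y‖²)` is
`4 q A'' q + 8 A' q` at `q = ‖y‖²`, and for `A q = B s / q` with `s = log (q / β)` this equals
`4 (B'' s - B' s) / q²`. For `B s = P / s² + C / s` (`barrierProfile P C`) one gets a subsolution
of `Δw = 2 w²` when `0 ≤ P ≤ 12` and `0 ≤ C ≤ 2`, and a supersolution when `12 ≤ P`, `2 ≤ C` and
`2 (P + C) ≤ P C`. The maximum principle (a positive value of `u - w` forces a positive interior
maximum, thanks to the boundary behaviour of `u` and `w`, and there `Δ (u - w) ≤ 0`) places `u_ε`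
above the subsolution with `β = (ε/2)²`, `C = 2` and below the supersolutions with `β = (2ε)²`,
`C > 2`. As `log (‖x‖² / β) ∼ 2 log (1/ε)`, both barriers at `x` are `∼ C / (2 ‖x‖² log (1/ε))`.
-/

open MeasureTheory Filter

/-- The Laplacian of `u : ℝ⁴ → ℝ` relative to a set `s`, defined as the sum of the
second derivatives in the coordinate directions (computed within `s`). -/
noncomputable def laplacianWithin (u : EuclideanSpace ℝ (Fin 4) → ℝ)
    (s : Set (EuclideanSpace ℝ (Fin 4))) (x : EuclideanSpace ℝ (Fin 4)) : ℝ :=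
  ∑ i : Fin 4, iteratedFDerivWithin ℝ 2 u s x
    ![EuclideanSpace.single i 1, EuclideanSpace.single i 1]

open Set Topology Bornology
open scoped RealInnerProductSpace

local notation "ℝ⁴" => EuclideanSpace ℝ (Fin 4)

theorem IsLocalMax.nonpos_of_hasDerivAt_deriv {g g' : ℝ → ℝ} {a b : ℝ} (h : IsLocalMax g a)
    (hg : ∀ᶠ t in 𝓝 a, HasDerivAt g (g' t) t) (hg' : HasDerivAt g' b a) : b ≤ 0 := by
  by_contra! hb
  have hg'a : g' a = 0 := h.hasDerivAt_eq_zero hg.self_of_nhds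
  -- `g' a = 0 < b` forces `g' > 0` just right of `a`, where the mean value theorem makes `g` grow
  have hpos : ∀ᶠ t in 𝓝[>] a, 0 < g' t := by
    filter_upwards [nhdsGT_le_nhdsNE a <| (hasDerivAt_iff_tendsto_slope.1 hg').eventually
      (eventually_gt_nhds hb), self_mem_nhdsWithin] with t ht (hat : a < t)
    rwa [slope_def_field, hg'a, sub_zero, div_pos_iff_of_pos_right (sub_pos.2 hat)] at ht
  obtain ⟨u, hau, hu⟩ :=
    mem_nhdsGT_iff_exists_Ioo_subset.1 (hpos.and (nhdsWithin_le_nhds (hg.and h)))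
  obtain ⟨t, hat, htu⟩ := exists_between (mem_Ioi.1 hau)
  have hderiv : ∀ s ∈ Icc a t, HasDerivAt g (g' s) s := fun s hs =>
    hs.1.eq_or_lt.elim (fun has => has ▸ hg.self_of_nhds) fun has =>
      (hu ⟨has, hs.2.trans_lt htu⟩).2.1
  obtain ⟨ξ, hξ, hslope⟩ := exists_hasDerivAt_eq_slope g g' hat
    (fun s hs => (hderiv s hs).continuousAt.continuousWithinAt)
    (fun s hs => hderiv s (Ioo_subset_Icc_self hs))
  have hξpos : 0 < (g t - g a) / (t - a) := hslope ▸ (hu ⟨hξ.1, hξ.2.trans htu⟩).1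
  have hta : g t ≤ g a := (hu ⟨hat, htu⟩).2.2
  rw [div_pos_iff_of_pos_right (sub_pos.2 hat)] at hξpos
  linarith

theorem IsLocalMax.nonpos_of_hasDerivAt_fderiv_line {E : Type*} [NormedAddCommGroup E]
    [NormedSpace ℝ E] {f : E → ℝ} {f' : E → E →L[ℝ] ℝ} {z e : E} {b : ℝ} (h : IsLocalMax f z)
    (hf : ∀ᶠ y in 𝓝 z, HasFDerivAt f (f' y) y)
    (hf' : HasDerivAt (fun t : ℝ => f' (z + t • e) e) b 0) : b ≤ 0 := by
  set γ : ℝ → E := fun t => z + t • e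
  have hγ : ∀ t, HasDerivAt γ e t := fun t => by
    simpa [γ] using ((hasDerivAt_id t).smul_const e).const_add z
  have hγ0 : γ 0 = z := by simp [γ]
  have hγz : Tendsto γ (𝓝 0) (𝓝 z) := hγ0 ▸ (hγ 0).continuousAt.tendsto
  refine IsLocalMax.nonpos_of_hasDerivAt_deriv (g := f ∘ γ)
    ((hγ0 ▸ h : IsLocalMax f (γ 0)).comp_continuous (hγ 0).continuousAt) ?_ hf'
  filter_upwards [hγz.eventually hf] with t ht using ht.comp_hasDerivAt t (hγ t)

theorem isCompact_setOf_norm_mem_Icc {E : Type*} [NormedAddCommGroup E] [ProperSpace E]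
    (r R : ℝ) : IsCompact {y : E | ‖y‖ ∈ Icc r R} :=
  (isCompact_closedBall 0 R).of_isClosed_subset (isClosed_Icc.preimage continuous_norm)
    fun _ hy => mem_closedBall_zero_iff.2 hy.2

theorem exists_isLocalMax_of_eventually_lt {E : Type*} [NormedAddCommGroup E] [ProperSpace E]
    {h : E → ℝ} {a : ℝ} {y₀ : E} (hy₀ : a < ‖y₀‖) (hc : ContinuousOn h {y | a < ‖y‖})
    (hinner : ∀ᶠ y in comap norm (𝓝[>] a), h y < h y₀)
    (houter : ∀ᶠ y in cobounded E, h y < h y₀) :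
    ∃ z, a < ‖z‖ ∧ IsLocalMax h z ∧ h y₀ ≤ h z := by
  rw [eventually_comap] at hinner
  obtain ⟨w, hw, hw_sub⟩ := mem_nhdsGT_iff_exists_Ioo_subset.1 hinner
  rw [← comap_norm_atTop, eventually_comap, eventually_atTop] at houter
  obtain ⟨R, hR⟩ := houter
  obtain ⟨a', ha', ha'_lt⟩ := exists_between (lt_min hw hy₀)
  set R' := max R ‖y₀‖ + 1
  have hy₀K : ‖y₀‖ ∈ Icc a' R' :=
    ⟨(ha'_lt.trans_le (min_le_right _ _)).le, by linarith [le_max_right R ‖y₀‖]⟩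
  obtain ⟨z, hzK, hmax⟩ := (isCompact_setOf_norm_mem_Icc a' R').exists_isMaxOn ⟨y₀, hy₀K⟩
    (hc.mono fun y hy => ha'.trans_le hy.1)
  have hz : h y₀ ≤ h z := hmax hy₀K
  have hz_inner : a' < ‖z‖ := hzK.1.lt_of_ne fun hza => (hw_sub
    ⟨ha', ha'_lt.trans_le (min_le_left _ _)⟩ z hza.symm).not_ge hz
  have hz_outer : ‖z‖ < R' := hzK.2.lt_of_ne fun hzR =>
    (hR R' (by linarith [le_max_left R ‖y₀‖]) z hzR).not_ge hz
  have hshell : {y : E | a' < ‖y‖ ∧ ‖y‖ < R'} ∈ 𝓝 z :=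
    ((isOpen_lt continuous_const continuous_norm).inter
      (isOpen_lt continuous_norm continuous_const)).mem_nhds ⟨hz_inner, hz_outer⟩
  exact ⟨z, ha'.trans hz_inner,
    hmax.isLocalMax (mem_of_superset hshell fun y hy => ⟨hy.1.le, hy.2.le⟩), hz⟩

section LineDerivatives

variable {E : Type*} [NormedAddCommGroup E] [NormedSpace ℝ E]

theorem ContDiffOn.eventually_hasFDerivAt_fderiv {f : E → ℝ} {Ω : Set E}
    (hf : ContDiffOn ℝ 2 f Ω) (hΩ : IsOpen Ω) {z : E} (hz : z ∈ Ω) :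
    ∀ᶠ y in 𝓝 z, HasFDerivAt f (fderiv ℝ f y) y := by
  filter_upwards [hΩ.mem_nhds hz] with y hy
  exact ((hf.contDiffAt (hΩ.mem_nhds hy)).differentiableAt (by norm_num)).hasFDerivAt

theorem ContDiffOn.hasDerivAt_fderiv_line {f : E → ℝ} {Ω : Set E} (hf : ContDiffOn ℝ 2 f Ω)
    (hΩ : IsOpen Ω) {z : E} (hz : z ∈ Ω) (e : E) :
    HasDerivAt (fun t : ℝ => fderiv ℝ f (z + t • e) e) (fderiv ℝ (fderiv ℝ f) z e e) 0 := by
  have hf' : HasFDerivAt (fderiv ℝ f) (fderiv ℝ (fderiv ℝ f) z) (z + (0 : ℝ) • e) := by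
    rw [zero_smul, add_zero]
    exact (((hf.contDiffAt (hΩ.mem_nhds hz)).fderiv_right (m := 1) (by norm_num)).differentiableAt
      (by norm_num)).hasFDerivAt
  have hline : HasDerivAt (fun t : ℝ => z + t • e) e 0 := by
    simpa using ((hasDerivAt_id (0 : ℝ)).smul_const e).const_add z
  exact (ContinuousLinearMap.apply ℝ ℝ e).hasFDerivAt.comp_hasDerivAt 0
    (hf'.comp_hasDerivAt 0 hline)

end LineDerivatives

section Radial

variable {F : Type*} [NormedAddCommGroup F] [InnerProductSpace ℝ F]

theorem HasDerivAt.hasFDerivAt_comp_norm_sq {A : ℝ → ℝ} {a : ℝ} {y : F}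
    (hA : HasDerivAt A a (‖y‖ ^ 2)) :
    HasFDerivAt (fun y => A (‖y‖ ^ 2)) ((2 * a) • innerSL ℝ y) y := by
  refine (hA.comp_hasFDerivAt y (hasStrictFDerivAt_norm_sq y).hasFDerivAt).congr_fderiv ?_
  ext v
  simp [innerSL_apply_apply]
  ring

theorem HasDerivAt.hasDerivAt_radial_line {A : ℝ → ℝ} {a : ℝ} {z e : F}
    (hA : HasDerivAt A a (‖z‖ ^ 2)) :
    HasDerivAt (fun t : ℝ => ((2 * A (‖z + t • e‖ ^ 2)) • innerSL ℝ (z + t • e)) e)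
      (4 * a * ⟪z, e⟫ ^ 2 + 2 * A (‖z‖ ^ 2) * ‖e‖ ^ 2) 0 := by
  have hline : HasDerivAt (fun t : ℝ => z + t • e) e 0 := by
    simpa using ((hasDerivAt_id (0 : ℝ)).smul_const e).const_add z
  have hnorm : HasDerivAt (fun t : ℝ => ‖z + t • e‖ ^ 2) (2 * ⟪z, e⟫) 0 := by
    simpa using hline.norm_sq
  have hinner : HasDerivAt (fun t : ℝ => ⟪z + t • e, e⟫) (‖e‖ ^ 2) 0 := by
    simpa [real_inner_self_eq_norm_sq] using HasDerivAt.inner ℝ hline (hasDerivAt_const (0 : ℝ) e)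
  have hA' : HasDerivAt A a (‖z + (0 : ℝ) • e‖ ^ 2) := by simpa using hA
  have hfun : (fun t : ℝ => ((2 * A (‖z + t • e‖ ^ 2)) • innerSL ℝ (z + t • e)) e)
      = fun t => 2 * A (‖z + t • e‖ ^ 2) * ⟪z + t • e, e⟫ := by
    funext t
    simp only [FunLike.coe_smul, Pi.smul_apply, innerSL_apply_apply, smul_eq_mul]
  rw [hfun]
  exact (((hA'.comp 0 hnorm).const_mul 2).mul hinner).congr_deriv (by simp; ring)

end Radial

theorem laplacianWithin_eq_sum_fderiv_fderiv {Ω : Set ℝ⁴} (hΩ : IsOpen Ω) {z : ℝ⁴} (hz : z ∈ Ω)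
    (v : ℝ⁴ → ℝ) :
    laplacianWithin v Ω z = ∑ i : Fin 4,
      fderiv ℝ (fderiv ℝ v) z (EuclideanSpace.single i 1) (EuclideanSpace.single i 1) := by
  refine Finset.sum_congr rfl fun i _ => ?_
  rw [iteratedFDerivWithin_of_isOpen 2 hΩ hz, iteratedFDeriv_two_apply]
  rfl

theorem laplacianWithin_neg {Ω : Set ℝ⁴} (hΩ : IsOpen Ω) {z : ℝ⁴} (hz : z ∈ Ω) (v : ℝ⁴ → ℝ) :
    laplacianWithin (-v) Ω z = -laplacianWithin v Ω z := by
  have : fderiv ℝ (-v) = -fderiv ℝ v := funext fun y => fderiv_neg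
  simp [laplacianWithin_eq_sum_fderiv_fderiv hΩ hz, this, fderiv_neg]

theorem sum_radial_second_derivatives (z : ℝ⁴) (a c : ℝ) :
    ∑ i : Fin 4, (4 * a * ⟪z, EuclideanSpace.single i 1⟫ ^ 2
      + 2 * c * ‖EuclideanSpace.single i (1 : ℝ)‖ ^ 2) = 4 * ‖z‖ ^ 2 * a + 8 * c := by
  simp [EuclideanSpace.norm_sq_eq, EuclideanSpace.inner_single_right, Finset.sum_add_distrib,
    ← Finset.mul_sum, Fin.sum_univ_four]
  ring

theorem laplacianWithin_le_of_isLocalMax_sub_radial {Ω : Set ℝ⁴} (hΩ : IsOpen Ω)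
    {v : ℝ⁴ → ℝ} (hv : ContDiffOn ℝ 2 v Ω) {z : ℝ⁴} (hz : z ∈ Ω) {A A' : ℝ → ℝ} {a : ℝ}
    (hA : ∀ᶠ q in 𝓝 (‖z‖ ^ 2), HasDerivAt A (A' q) q) (hA' : HasDerivAt A' a (‖z‖ ^ 2))
    (hmax : IsLocalMax (fun y => v y - A (‖y‖ ^ 2)) z) :
    laplacianWithin v Ω z ≤ 4 * ‖z‖ ^ 2 * a + 8 * A' (‖z‖ ^ 2) := by
  have hW : ∀ᶠ y in 𝓝 z,
      HasFDerivAt (fun y => A (‖y‖ ^ 2)) ((2 * A' (‖y‖ ^ 2)) • innerSL ℝ y) y :=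
    ((continuous_norm.pow 2).continuousAt.tendsto.eventually hA).mono fun y hy =>
      hy.hasFDerivAt_comp_norm_sq
  have hvW := ((hv.eventually_hasFDerivAt_fderiv hΩ hz).and hW).mono fun y hy => hy.1.sub hy.2
  rw [laplacianWithin_eq_sum_fderiv_fderiv hΩ hz, ← sum_radial_second_derivatives z a]
  exact Finset.sum_le_sum fun i _ => sub_nonpos.1 <| hmax.nonpos_of_hasDerivAt_fderiv_line hvW
    ((hv.hasDerivAt_fderiv_line hΩ hz _).sub hA'.hasDerivAt_radial_line)

theorem le_laplacianWithin_of_isLocalMax_radial_sub {Ω : Set ℝ⁴} (hΩ : IsOpen Ω)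
    {v : ℝ⁴ → ℝ} (hv : ContDiffOn ℝ 2 v Ω) {z : ℝ⁴} (hz : z ∈ Ω) {A A' : ℝ → ℝ} {a : ℝ}
    (hA : ∀ᶠ q in 𝓝 (‖z‖ ^ 2), HasDerivAt A (A' q) q) (hA' : HasDerivAt A' a (‖z‖ ^ 2))
    (hmax : IsLocalMax (fun y => A (‖y‖ ^ 2) - v y) z) :
    4 * ‖z‖ ^ 2 * a + 8 * A' (‖z‖ ^ 2) ≤ laplacianWithin v Ω z := by
  have h := laplacianWithin_le_of_isLocalMax_sub_radial hΩ (v := -v) hv.neg hz (A := -A) (A' := -A')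
    (hA.mono fun q hq => hq.neg) hA'.neg (by simpa [neg_add_eq_sub] using hmax)
  rw [laplacianWithin_neg hΩ hz] at h
  simp only [Pi.neg_apply] at h
  linarith

section NormSq

variable {E : Type*} [NormedAddCommGroup E]

theorem continuousOn_comp_norm_sq {A : ℝ → ℝ} {r : ℝ} (hr : 0 ≤ r)
    (hA : ∀ q ∈ Ioi (r ^ 2), ContinuousAt A q) :
    ContinuousOn (fun y : E => A (‖y‖ ^ 2)) {y | r < ‖y‖} := fun y hy =>
  (ContinuousAt.comp (g := A) (f := fun y : E => ‖y‖ ^ 2)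
    (hA _ (pow_lt_pow_left₀ hy hr two_ne_zero)) (by fun_prop)).continuousWithinAt

theorem tendsto_norm_sq_comap_nhdsGT {r : ℝ} (hr : 0 ≤ r) :
    Tendsto (fun y : E => ‖y‖ ^ 2) (comap norm (𝓝[>] r)) (𝓝[>] (r ^ 2)) := by
  refine Tendsto.comp (g := fun s : ℝ => s ^ 2) ?_ tendsto_comap
  exact tendsto_nhdsWithin_iff.2 ⟨((continuous_pow 2).tendsto r).mono_left nhdsWithin_le_nhds,
    eventually_nhdsWithin_of_forall fun s hs => pow_lt_pow_left₀ hs hr two_ne_zero⟩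

end NormSq

structure SolvesOutsideBall (ε : ℝ) (v : ℝ⁴ → ℝ) : Prop where
  contDiffOn : ContDiffOn ℝ 2 v {y | ε < ‖y‖}
  laplacianWithin_eq : ∀ y, ε < ‖y‖ → laplacianWithin v {y | ε < ‖y‖} y = 2 * v y ^ 2

namespace SolvesOutsideBall

variable {ε : ℝ} {v : ℝ⁴ → ℝ}

theorem le_of_supersolution (hv : SolvesOutsideBall ε v)
    (hv_lim : Tendsto v (cobounded ℝ⁴) (𝓝 0)) {a : ℝ} (ha : 0 ≤ a) (hεa : ε < a)
    {A A' A'' : ℝ → ℝ} (hA : ∀ q ∈ Ioi (a ^ 2), HasDerivAt A (A' q) q)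
    (hA' : ∀ q ∈ Ioi (a ^ 2), HasDerivAt A' (A'' q) q)
    (hA_nonneg : ∀ q ∈ Ioi (a ^ 2), 0 ≤ A q)
    (hA_super : ∀ q ∈ Ioi (a ^ 2), 4 * q * A'' q + 8 * A' q ≤ 2 * A q ^ 2)
    (hA_lim : Tendsto A (𝓝[>] (a ^ 2)) atTop) {y : ℝ⁴} (hy : a < ‖y‖) :
    v y ≤ A (‖y‖ ^ 2) := by
  have hsq : ∀ y : ℝ⁴, a < ‖y‖ → a ^ 2 < ‖y‖ ^ 2 := fun y hy =>
    pow_lt_pow_left₀ hy ha two_ne_zero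
  by_contra! hlt
  set h : ℝ⁴ → ℝ := fun y => v y - A (‖y‖ ^ 2)
  have hhy : 0 < h y := sub_pos.2 hlt
  obtain ⟨M, hM⟩ := (isCompact_setOf_norm_mem_Icc a (a + 1)).bddAbove_image
    (hv.contDiffOn.continuousOn.mono fun y hy => hεa.trans_le hy.1)
  have hinner : ∀ᶠ x in comap norm (𝓝[>] a), h x < h y := by
    filter_upwards [preimage_mem_comap (Ioo_mem_nhdsGT (lt_add_one a)),
      (hA_lim.comp (tendsto_norm_sq_comap_nhdsGT ha)).eventually_gt_atTop (M - h y)]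
      with x hx hAx
    have := hM ⟨x, Ioo_subset_Icc_self hx, rfl⟩
    simp only [h, Function.comp_apply] at hAx ⊢
    linarith
  have houter : ∀ᶠ x in cobounded ℝ⁴, h x < h y := by
    filter_upwards [hv_lim.eventually (gt_mem_nhds hhy),
      tendsto_norm_cobounded_atTop.eventually_gt_atTop a] with x hvx hx
    have := hA_nonneg _ (hsq x hx)
    simp only [h]
    linarith
  obtain ⟨z, hz, hmax, hyz⟩ := exists_isLocalMax_of_eventually_lt hy
    ((hv.contDiffOn.continuousOn.mono fun y hy => hεa.trans hy).sub
      (continuousOn_comp_norm_sq ha fun q hq => (hA q hq).continuousAt)) hinner houter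
  have hΔ := laplacianWithin_le_of_isLocalMax_sub_radial
    (isOpen_lt continuous_const continuous_norm) hv.contDiffOn (hεa.trans hz)
    (eventually_of_mem (Ioi_mem_nhds (hsq z hz)) hA) (hA' _ (hsq z hz)) hmax
  rw [hv.laplacianWithin_eq z (hεa.trans hz)] at hΔ
  have := hA_super _ (hsq z hz)
  have := hA_nonneg _ (hsq z hz)
  have : A (‖z‖ ^ 2) < v z := sub_pos.1 (hhy.trans_le hyz)
  nlinarith

theorem subsolution_le (hv : SolvesOutsideBall ε v) (hv_nonneg : ∀ y : ℝ⁴, ε < ‖y‖ → 0 ≤ v y)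
    (hv_lim : Tendsto v (comap norm (𝓝[>] ε)) atTop) (hε : 0 ≤ ε) {β : ℝ} (hβ : β < ε ^ 2)
    {A A' A'' : ℝ → ℝ} (hA : ∀ q ∈ Ioi β, HasDerivAt A (A' q) q)
    (hA' : ∀ q ∈ Ioi β, HasDerivAt A' (A'' q) q)
    (hA_sub : ∀ q ∈ Ioi β, 2 * A q ^ 2 ≤ 4 * q * A'' q + 8 * A' q)
    (hA_lim : Tendsto A atTop (𝓝 0)) {y : ℝ⁴} (hy : ε < ‖y‖) :
    A (‖y‖ ^ 2) ≤ v y := by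
  have hsq : ∀ y : ℝ⁴, ε < ‖y‖ → β < ‖y‖ ^ 2 := fun y hy =>
    hβ.trans (pow_lt_pow_left₀ hy hε two_ne_zero)
  by_contra! hlt
  set h : ℝ⁴ → ℝ := fun y => A (‖y‖ ^ 2) - v y
  have hhy : 0 < h y := sub_pos.2 hlt
  have hinner : ∀ᶠ x in comap norm (𝓝[>] ε), h x < h y := by
    have hAε : Tendsto (fun y : ℝ⁴ => A (‖y‖ ^ 2)) (comap norm (𝓝[>] ε)) (𝓝 (A (ε ^ 2))) :=
      (hA _ hβ).continuousAt.tendsto.comp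
        ((tendsto_norm_sq_comap_nhdsGT hε).mono_right nhdsWithin_le_nhds)
    filter_upwards [hAε.eventually (gt_mem_nhds (lt_add_one _)),
      hv_lim.eventually_gt_atTop (A (ε ^ 2) + 1 - h y)] with x hAx hvx
    simp only [h]
    linarith
  have houter : ∀ᶠ x in cobounded ℝ⁴, h x < h y := by
    filter_upwards [(hA_lim.comp ((tendsto_pow_atTop two_ne_zero).comp
        tendsto_norm_cobounded_atTop)).eventually (gt_mem_nhds hhy),
      tendsto_norm_cobounded_atTop.eventually_gt_atTop ε] with x hAx hx
    have := hv_nonneg x hx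
    simp only [h, Function.comp_apply] at hAx ⊢
    linarith
  obtain ⟨z, hz, hmax, hyz⟩ := exists_isLocalMax_of_eventually_lt hy
    ((continuousOn_comp_norm_sq hε fun q hq => (hA q (hβ.trans hq)).continuousAt).sub
      hv.contDiffOn.continuousOn) hinner houter
  have hΔ := le_laplacianWithin_of_isLocalMax_radial_sub
    (isOpen_lt continuous_const continuous_norm) hv.contDiffOn hz
    (eventually_of_mem (Ioi_mem_nhds (hsq z hz)) hA) (hA' _ (hsq z hz)) hmax
  rw [hv.laplacianWithin_eq z hz] at hΔ
  have := hA_sub _ (hsq z hz)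
  have := hv_nonneg z hz
  have : v z < A (‖z‖ ^ 2) := sub_pos.1 (hhy.trans_le hyz)
  nlinarith

end SolvesOutsideBall

theorem HasDerivAt.div_pow_comp_log_div {B : ℝ → ℝ} {b β q : ℝ} (k : ℕ) (hβ : β ≠ 0)
    (hq : q ≠ 0) (hB : HasDerivAt B b (Real.log (q / β))) :
    HasDerivAt (fun q => B (Real.log (q / β)) / q ^ k)
      ((b - k * B (Real.log (q / β))) / q ^ (k + 1)) q := by
  have hlog : HasDerivAt (fun q => Real.log (q / β)) q⁻¹ q :=
    (((hasDerivAt_id' q).div_const β).log (div_ne_zero hq hβ)).congr_deriv (by field_simp)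
  refine ((hB.comp q hlog).div (hasDerivAt_pow k q) (pow_ne_zero k hq)).congr_deriv ?_
  rcases k with _ | k
  · simp [div_eq_mul_inv]
  · simp only [Nat.add_sub_cancel, Nat.cast_add, Nat.cast_one, Function.comp_apply]
    field_simp
    ring

theorem hasDerivAt_profile_div {B B' B'' : ℝ → ℝ} {β q : ℝ} (hβ : 0 < β) (hq : β < q)
    (hB : ∀ s ∈ Ioi 0, HasDerivAt B (B' s) s) (hB' : ∀ s ∈ Ioi 0, HasDerivAt B' (B'' s) s) :
    HasDerivAt (fun q => B (Real.log (q / β)) / q)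
        ((B' (Real.log (q / β)) - B (Real.log (q / β))) / q ^ 2) q ∧
      HasDerivAt (fun q => (B' (Real.log (q / β)) - B (Real.log (q / β))) / q ^ 2)
        ((B'' (Real.log (q / β)) - 3 * B' (Real.log (q / β)) + 2 * B (Real.log (q / β)))
          / q ^ 3) q := by
  have hs : Real.log (q / β) ∈ Ioi 0 := Real.log_pos ((one_lt_div hβ).2 hq)
  have hq0 : q ≠ 0 := (hβ.trans hq).ne'
  constructor
  · simpa using (hB _ hs).div_pow_comp_log_div 1 hβ.ne' hq0
  · refine (((hB' _ hs).sub (hB _ hs)).div_pow_comp_log_div 2 hβ.ne' hq0).congr_deriv ?_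
    simp only [Pi.sub_apply]
    push_cast
    ring

theorem tendsto_log_div_nhdsGT {β : ℝ} (hβ : 0 < β) :
    Tendsto (fun q => Real.log (q / β)) (𝓝[>] β) (𝓝[>] 0) := by
  refine tendsto_nhdsWithin_iff.2 ⟨?_, eventually_nhdsWithin_of_forall fun q hq =>
    Real.log_pos ((one_lt_div hβ).2 hq)⟩
  have hcont : ContinuousAt (fun q => Real.log (q / β)) β :=
    (continuousAt_id.div_const β).log (div_ne_zero hβ.ne' hβ.ne')
  simpa [hβ.ne'] using hcont.tendsto.mono_left nhdsWithin_le_nhds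

theorem radial_operator_profile_div {q : ℝ} (hq : q ≠ 0) (b b' b'' : ℝ) :
    4 * q * ((b'' - 3 * b' + 2 * b) / q ^ 3) + 8 * ((b' - b) / q ^ 2)
      = 2 * (2 * (b'' - b')) / q ^ 2 := by
  field_simp
  ring

namespace SolvesOutsideBall

variable {ε : ℝ} {v : ℝ⁴ → ℝ} {B B' B'' : ℝ → ℝ}

theorem le_profile_div (hv : SolvesOutsideBall ε v) (hv_lim : Tendsto v (cobounded ℝ⁴) (𝓝 0))
    {a : ℝ} (ha : 0 < a) (hεa : ε < a) (hB : ∀ s ∈ Ioi 0, HasDerivAt B (B' s) s)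
    (hB' : ∀ s ∈ Ioi 0, HasDerivAt B' (B'' s) s) (hB_nonneg : ∀ s ∈ Ioi 0, 0 ≤ B s)
    (hB_super : ∀ s ∈ Ioi 0, 2 * (B'' s - B' s) ≤ B s ^ 2) (hB_lim : Tendsto B (𝓝[>] 0) atTop)
    {y : ℝ⁴} (hy : a < ‖y‖) :
    v y ≤ B (Real.log (‖y‖ ^ 2 / a ^ 2)) / ‖y‖ ^ 2 := by
  have ha2 : 0 < a ^ 2 := by positivity
  have hs : ∀ q ∈ Ioi (a ^ 2), Real.log (q / a ^ 2) ∈ Ioi 0 := fun q hq =>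
    Real.log_pos ((one_lt_div ha2).2 hq)
  refine hv.le_of_supersolution hv_lim ha.le hεa
    (fun q hq => (hasDerivAt_profile_div ha2 hq hB hB').1)
    (fun q hq => (hasDerivAt_profile_div ha2 hq hB hB').2)
    (fun q hq => div_nonneg (hB_nonneg _ (hs q hq)) (ha2.trans hq).le) (fun q hq => ?_) ?_ hy
  · rw [radial_operator_profile_div (ha2.trans hq).ne', div_pow, mul_div_assoc]
    gcongr
    exact hB_super _ (hs q hq)
  · exact ((hB_lim.comp (tendsto_log_div_nhdsGT ha2)).atTop_mul_pos (inv_pos.2 ha2)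
      ((tendsto_inv₀ ha2.ne').mono_left nhdsWithin_le_nhds)).congr fun q =>
        (div_eq_mul_inv _ _).symm

theorem profile_div_le (hv : SolvesOutsideBall ε v) (hv_nonneg : ∀ y : ℝ⁴, ε < ‖y‖ → 0 ≤ v y)
    (hv_lim : Tendsto v (comap norm (𝓝[>] ε)) atTop) (hε : 0 ≤ ε) {β : ℝ} (hβ : 0 < β)
    (hβε : β < ε ^ 2) (hB : ∀ s ∈ Ioi 0, HasDerivAt B (B' s) s)
    (hB' : ∀ s ∈ Ioi 0, HasDerivAt B' (B'' s) s)
    (hB_sub : ∀ s ∈ Ioi 0, B s ^ 2 ≤ 2 * (B'' s - B' s)) (hB_lim : Tendsto B atTop (𝓝 0))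
    {y : ℝ⁴} (hy : ε < ‖y‖) :
    B (Real.log (‖y‖ ^ 2 / β)) / ‖y‖ ^ 2 ≤ v y := by
  refine hv.subsolution_le hv_nonneg hv_lim hε hβε
    (fun q hq => (hasDerivAt_profile_div hβ hq hB hB').1)
    (fun q hq => (hasDerivAt_profile_div hβ hq hB hB').2) (fun q hq => ?_) ?_ hy
  · rw [radial_operator_profile_div (hβ.trans hq).ne', div_pow, mul_div_assoc]
    gcongr
    exact hB_sub _ (Real.log_pos ((one_lt_div hβ).2 hq))
  · exact (hB_lim.comp (Real.tendsto_log_atTop.comp (tendsto_id.atTop_div_const hβ))).div_atTop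
      tendsto_id

end SolvesOutsideBall

noncomputable def barrierProfile (P C s : ℝ) : ℝ := P / s ^ 2 + C / s

section BarrierProfile

variable (P C : ℝ) {s : ℝ}

theorem hasDerivAt_barrierProfile (hs : s ≠ 0) :
    HasDerivAt (barrierProfile P C) (-(2 * P / s ^ 3 + C / s ^ 2)) s := by
  refine (((hasDerivAt_const s P).div (hasDerivAt_pow 2 s) (pow_ne_zero 2 hs)).add
    ((hasDerivAt_const s C).div (hasDerivAt_id' s) hs)).congr_deriv ?_
  field_simp
  ring

theorem hasDerivAt_barrierProfile_deriv (hs : s ≠ 0) :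
    HasDerivAt (fun s => -(2 * P / s ^ 3 + C / s ^ 2)) (6 * P / s ^ 4 + 2 * C / s ^ 3) s := by
  refine ((((hasDerivAt_const s (2 * P)).div (hasDerivAt_pow 3 s) (pow_ne_zero 3 hs)).add
    ((hasDerivAt_const s C).div (hasDerivAt_pow 2 s) (pow_ne_zero 2 hs))).neg).congr_deriv ?_
  field_simp
  ring

theorem barrierProfile_sq_sub (hs : s ≠ 0) :
    barrierProfile P C s ^ 2 - 2 * (6 * P / s ^ 4 + 2 * C / s ^ 3 - -(2 * P / s ^ 3 + C / s ^ 2))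
      = (P * (P - 12) + 2 * (P * C - 2 * P - 2 * C) * s + C * (C - 2) * s ^ 2) / s ^ 4 := by
  unfold barrierProfile
  field_simp
  ring

variable {P C}

theorem barrierProfile_nonneg (hP : 0 ≤ P) (hC : 0 ≤ C) (hs : 0 < s) : 0 ≤ barrierProfile P C s :=
  add_nonneg (by positivity) (by positivity)

theorem barrierProfile_sq_le (hP₀ : 0 ≤ P) (hP : P ≤ 12) (hC₀ : 0 ≤ C) (hC : C ≤ 2)
    (hs : 0 < s) :
    barrierProfile P C s ^ 2
      ≤ 2 * (6 * P / s ^ 4 + 2 * C / s ^ 3 - -(2 * P / s ^ 3 + C / s ^ 2)) := by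
  refine sub_nonpos.1 ((barrierProfile_sq_sub P C hs.ne').symm ▸ div_nonpos_of_nonpos_of_nonneg ?_
    (by positivity))
  have : 0 ≤ P * (12 - P) := mul_nonneg hP₀ (by linarith)
  have : 0 ≤ P * (2 - C) := mul_nonneg hP₀ (by linarith)
  have : 0 ≤ C * (2 - C) * s ^ 2 := mul_nonneg (mul_nonneg hC₀ (sub_nonneg.2 hC)) (sq_nonneg s)
  nlinarith

theorem le_barrierProfile_sq (hP : 12 ≤ P) (hC : 2 ≤ C) (hPC : 2 * (P + C) ≤ P * C)
    (hs : 0 < s) :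
    2 * (6 * P / s ^ 4 + 2 * C / s ^ 3 - -(2 * P / s ^ 3 + C / s ^ 2))
      ≤ barrierProfile P C s ^ 2 := by
  refine sub_nonneg.1 ((barrierProfile_sq_sub P C hs.ne').symm ▸ div_nonneg ?_ (by positivity))
  have : 0 ≤ P * (P - 12) := mul_nonneg (by linarith) (by linarith)
  have : 0 ≤ C * (C - 2) * s ^ 2 :=
    mul_nonneg (mul_nonneg (by linarith) (sub_nonneg.2 hC)) (sq_nonneg s)
  nlinarith

theorem tendsto_barrierProfile_nhdsGT_zero (hP : 0 ≤ P) (hC : 0 < C) :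
    Tendsto (barrierProfile P C) (𝓝[>] 0) atTop :=
  tendsto_atTop_add_left_of_le' _ 0 (Eventually.of_forall fun s => by positivity)
    ((tendsto_inv_nhdsGT_zero.const_mul_atTop hC).congr fun s => (div_eq_mul_inv C s).symm)

theorem tendsto_barrierProfile_atTop : Tendsto (barrierProfile P C) atTop (𝓝 0) := by
  have h := ((tendsto_const_nhds (x := P)).div_atTop (tendsto_pow_atTop two_ne_zero)).add
    ((tendsto_const_nhds (x := C)).div_atTop tendsto_id)
  rw [add_zero] at h
  exact h

end BarrierProfile

theorem tendsto_log_inv_mul_barrierProfile (P C : ℝ) {κ r : ℝ} (hκ : 0 < κ) (hr : 0 < r) :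
    Tendsto (fun ε => Real.log (1 / ε) *
        (barrierProfile P C (Real.log (r ^ 2 / (κ * ε) ^ 2)) / r ^ 2))
      (𝓝[>] 0) (𝓝 (C / (2 * r ^ 2))) := by
  set k := Real.log (r / κ)
  -- for `0 < ε < min 1 (r / κ)` the quantity is `G (log (1 / ε))⁻¹`
  set G : ℝ → ℝ := fun w => (P / 4 * w / (1 + k * w) ^ 2 + C / 2 / (1 + k * w)) / r ^ 2
  have hG : ContinuousAt G 0 := by fun_prop (disch := simp [hr.ne'])
  have hG0 : G 0 = C / (2 * r ^ 2) := by simp only [G]; ring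
  have hT : Tendsto (fun ε : ℝ => Real.log (1 / ε)) (𝓝[>] 0) atTop :=
    Real.tendsto_log_atTop.comp (tendsto_inv_nhdsGT_zero.congr fun ε => (one_div ε).symm)
  refine hG0 ▸ (hG.tendsto.comp (tendsto_inv_atTop_zero.comp hT)).congr' ?_
  filter_upwards [Ioo_mem_nhdsGT (lt_min one_pos (div_pos hr hκ))] with ε ⟨hε0, hε⟩
  have hlog : Real.log (1 / ε) + k = Real.log (r / (κ * ε)) := by
    rw [← Real.log_mul (by positivity) (by positivity)]
    congr 1
    field_simp
  have hT0 : 0 < Real.log (1 / ε) :=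
    Real.log_pos ((one_lt_div hε0).2 (hε.trans_le (min_le_left _ _)))
  have hκε : κ * ε < r := (lt_div_iff₀' hκ).1 (hε.trans_le (min_le_right _ _))
  have hTk : 0 < Real.log (1 / ε) + k :=
    hlog ▸ Real.log_pos ((one_lt_div (by positivity)).2 hκε)
  have hs : Real.log (r ^ 2 / (κ * ε) ^ 2) = 2 * (Real.log (1 / ε) + k) := by
    rw [← div_pow, Real.log_pow, hlog]
    push_cast
    ring
  simp only [Function.comp_apply, G, barrierProfile, hs]
  field_simp
  ring

theorem exists_barrierProfile_params {L : ℝ} (hL : 2 < L) :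
    ∃ P C : ℝ, 12 ≤ P ∧ 2 ≤ C ∧ 2 * (P + C) ≤ P * C ∧ C < L := by
  obtain ⟨C, hC₂, hCL⟩ := exists_between hL
  have hC : 0 < C - 2 := sub_pos.2 hC₂
  refine ⟨12 + 2 * C / (C - 2), C, ?_, hC₂.le, ?_, hCL⟩
  · linarith [div_pos (by linarith : (0 : ℝ) < 2 * C) hC]
  · have : 2 * C / (C - 2) * (C - 2) = 2 * C := div_mul_cancel₀ _ hC.ne'
    nlinarith

namespace SolvesOutsideBall

variable {ε : ℝ} {v : ℝ⁴ → ℝ} {P C : ℝ}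

theorem barrierProfile_div_le (hv : SolvesOutsideBall ε v)
    (hv_nonneg : ∀ y : ℝ⁴, ε < ‖y‖ → 0 ≤ v y) (hv_lim : Tendsto v (comap norm (𝓝[>] ε)) atTop)
    (hε : 0 ≤ ε) {β : ℝ} (hβ : 0 < β) (hβε : β < ε ^ 2) (hP₀ : 0 ≤ P) (hP : P ≤ 12)
    (hC₀ : 0 ≤ C) (hC : C ≤ 2) {y : ℝ⁴} (hy : ε < ‖y‖) :
    barrierProfile P C (Real.log (‖y‖ ^ 2 / β)) / ‖y‖ ^ 2 ≤ v y :=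
  hv.profile_div_le hv_nonneg hv_lim hε hβ hβε
    (fun _ hs => hasDerivAt_barrierProfile P C (ne_of_gt hs))
    (fun _ hs => hasDerivAt_barrierProfile_deriv P C (ne_of_gt hs))
    (fun _ hs => barrierProfile_sq_le hP₀ hP hC₀ hC hs) tendsto_barrierProfile_atTop hy

theorem le_barrierProfile_div (hv : SolvesOutsideBall ε v)
    (hv_lim : Tendsto v (cobounded ℝ⁴) (𝓝 0)) {a : ℝ} (ha : 0 < a) (hεa : ε < a)
    (hP : 12 ≤ P) (hC : 2 ≤ C) (hPC : 2 * (P + C) ≤ P * C) {y : ℝ⁴} (hy : a < ‖y‖) :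
    v y ≤ barrierProfile P C (Real.log (‖y‖ ^ 2 / a ^ 2)) / ‖y‖ ^ 2 :=
  hv.le_profile_div hv_lim ha hεa (fun _ hs => hasDerivAt_barrierProfile P C (ne_of_gt hs))
    (fun _ hs => hasDerivAt_barrierProfile_deriv P C (ne_of_gt hs))
    (fun _ hs => barrierProfile_nonneg (by linarith) (by linarith) hs)
    (fun _ hs => le_barrierProfile_sq hP hC hPC hs)
    (tendsto_barrierProfile_nhdsGT_zero (by linarith) (by linarith)) hy

end SolvesOutsideBall

/-- Lemma 1 of the paper, via Iscoe's lemma: if for each `ε ∈ (0,1)` the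
nonnegative function `u ε` is `C²` on `{|x| > ε}`, solves `Δu = 2u²` there, blows up at the
inner boundary and vanishes at infinity, then for every fixed `x ≠ 0`,
`u_ε(x) ∼ |x|^{−2} (log(1/ε))^{−1}` as `ε → 0`. -/
theorem hitting_probability_asymptotics
    (u : ℝ → EuclideanSpace ℝ (Fin 4) → ℝ)
    (h_nonneg : ∀ ε ∈ Set.Ioo (0 : ℝ) 1, ∀ x : EuclideanSpace ℝ (Fin 4),
      ε < ‖x‖ → 0 ≤ u ε x)
    (h_smooth : ∀ ε ∈ Set.Ioo (0 : ℝ) 1,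
      ContDiffOn ℝ 2 (u ε) {x : EuclideanSpace ℝ (Fin 4) | ε < ‖x‖})
    (h_pde : ∀ ε ∈ Set.Ioo (0 : ℝ) 1, ∀ x : EuclideanSpace ℝ (Fin 4), ε < ‖x‖ →
      laplacianWithin (u ε) {x : EuclideanSpace ℝ (Fin 4) | ε < ‖x‖} x = 2 * (u ε x) ^ 2)
    (h_boundary : ∀ ε ∈ Set.Ioo (0 : ℝ) 1,
      Tendsto (u ε) (Filter.comap norm (nhdsWithin ε (Set.Ioi ε))) atTop)
    (h_infinity : ∀ ε ∈ Set.Ioo (0 : ℝ) 1,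
      Tendsto (u ε) (Bornology.cobounded (EuclideanSpace ℝ (Fin 4))) (nhds 0)) :
    ∀ x : EuclideanSpace ℝ (Fin 4), x ≠ 0 →
      Tendsto (fun ε : ℝ => Real.log (1 / ε) * u ε x)
        (nhdsWithin 0 (Set.Ioi 0)) (nhds (‖x‖ ^ (-2 : ℝ))) := by
  intro x hx
  have hr : 0 < ‖x‖ := norm_pos_iff.2 hx
  have hsmall : ∀ᶠ ε in 𝓝[>] (0 : ℝ), ε ∈ Ioo 0 1 ∧ 2 * ε < ‖x‖ := by
    filter_upwards [Ioo_mem_nhdsGT (lt_min one_pos (half_pos hr))] with ε ⟨hε0, hε⟩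
    exact ⟨⟨hε0, hε.trans_le (min_le_left _ _)⟩, by linarith [min_le_right 1 (‖x‖ / 2)]⟩
  have hlog : ∀ ε ∈ Ioo (0 : ℝ) 1, 0 ≤ Real.log (1 / ε) := fun ε hε =>
    Real.log_nonneg ((one_le_div hε.1).2 hε.2.le)
  rw [show ‖x‖ ^ (-2 : ℝ) = 2 / (2 * ‖x‖ ^ 2) by
    rw [Real.rpow_neg hr.le, Real.rpow_two]; field_simp]
  refine tendsto_order.2 ⟨fun c hc => ?_, fun c hc => ?_⟩
  · filter_upwards [(tendsto_log_inv_mul_barrierProfile 0 2 one_half_pos hr).eventually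
      (lt_mem_nhds hc), hsmall] with ε hcε ⟨hε, hεx⟩
    refine hcε.trans_le (mul_le_mul_of_nonneg_left ?_ (hlog ε hε))
    exact SolvesOutsideBall.barrierProfile_div_le ⟨h_smooth ε hε, h_pde ε hε⟩ (h_nonneg ε hε)
      (h_boundary ε hε) hε.1.le (pow_pos (mul_pos one_half_pos hε.1) 2) (by nlinarith [hε.1])
      le_rfl (by norm_num) zero_le_two le_rfl (by linarith [hε.1])
  · obtain ⟨P, C, hP, hC, hPC, hCc⟩ :=
      exists_barrierProfile_params ((div_lt_iff₀ (by positivity)).1 hc)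
    filter_upwards [(tendsto_log_inv_mul_barrierProfile P C two_pos hr).eventually
      (gt_mem_nhds ((div_lt_iff₀ (by positivity)).2 hCc)), hsmall] with ε hcε ⟨hε, hεx⟩
    refine (mul_le_mul_of_nonneg_left ?_ (hlog ε hε)).trans_lt hcε
    exact SolvesOutsideBall.le_barrierProfile_div ⟨h_smooth ε hε, h_pde ε hε⟩ (h_infinity ε hε)
      (by linarith [hε.1]) (by linarith [hε.1]) hP hC hPC hεx
end

section
/- Let f ∈ 𝓕 and let p ≥ 2 be an integer. Then ∫_{f(ε)}^{∞} r^{−3} (log(r/ε))^{p−2} dr ∼ (2 f(ε)²)^{−1} (log(f(ε)/ε))^{p−2} as ε → 0; that is, the ratio of the two sides converges to 1. -/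
open MeasureTheory Filter

/-- The class `𝓕` of functions `f : (0,∞) → (0,∞)` with `f(ε) → 0` and `f(ε)/ε → ∞`
as `ε → 0+`. -/
def MemF (f : ℝ → ℝ) : Prop :=
  (∀ ε : ℝ, 0 < ε → 0 < f ε) ∧
  Tendsto f (nhdsWithin 0 (Set.Ioi 0)) (nhds 0) ∧
  Tendsto (fun ε => f ε / ε) (nhdsWithin 0 (Set.Ioi 0)) atTop

/-!
Write `a = f(ε)`, `L = log (a/ε)` and `k = p - 2`. For `r > a`, `log (r/ε) = L + log (r/a)`
lies between `L` and `L · (r/a)^(1/L)` (by `1 + x ≤ eˣ`), so the integrand is squeezed between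
`L^k / r³` and `L^k (r/a)^(k/L) / r³`. Both are explicitly integrable on `(a, ∞)`, with integrals
`L^k / (2a²)` and `L^k / (a² (2 - k/L))`; the ratio in question therefore lies in
`[1, 2/(2 - k/L)]`, and `L → ∞` as `ε → 0`.
-/

open Set Real Topology

lemma add_pow_le_pow_mul_exp {L t : ℝ} (hL : 0 < L) (ht : 0 ≤ L + t) (k : ℕ) :
    (L + t) ^ k ≤ L ^ k * exp (k * t / L) := by
  have h : L + t ≤ L * exp (t / L) :=
    calc L + t = L * (t / L + 1) := by field_simp; ring
      _ ≤ L * exp (t / L) := by gcongr; exact add_one_le_exp _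
  calc (L + t) ^ k ≤ (L * exp (t / L)) ^ k := by gcongr
    _ = L ^ k * exp (k * t / L) := by rw [mul_pow, ← exp_nat_mul, mul_div_assoc]

lemma log_div_pow_le_mul_rpow {a r ε : ℝ} (ha : 0 < a) (har : a ≤ r) (hε : 0 < ε)
    (hL : 0 < log (a / ε)) (k : ℕ) :
    log (r / ε) ^ k ≤ log (a / ε) ^ k * (r / a) ^ ((k : ℝ) / log (a / ε)) := by
  have hr : 0 < r := ha.trans_le har
  have hsplit : log (r / ε) = log (a / ε) + log (r / a) := by
    rw [← log_mul (by positivity) (by positivity)]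
    congr 1
    field_simp
  have hra : 0 ≤ log (r / a) := log_nonneg ((one_le_div ha).2 har)
  rw [hsplit, rpow_def_of_pos (by positivity), mul_comm (log (r / a)), ← mul_div_right_comm]
  exact add_pow_le_pow_mul_exp hL (by positivity) k

lemma rpow_div_cube_eqOn {a c : ℝ} (ha : 0 < a) :
    EqOn (fun r : ℝ => (r / a) ^ c / r ^ 3) (fun r => a ^ (-c) * r ^ (c - 3)) (Ioi a) := by
  intro r (hr : a < r)
  have hr0 : 0 < r := ha.trans hr
  dsimp only
  rw [div_rpow hr0.le ha.le, rpow_sub hr0, rpow_neg ha.le]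
  norm_cast
  ring

lemma integrableOn_Ioi_rpow_div_cube {a c : ℝ} (ha : 0 < a) (hc : c < 2) :
    IntegrableOn (fun r : ℝ => (r / a) ^ c / r ^ 3) (Ioi a) :=
  IntegrableOn.congr_fun
    ((integrableOn_Ioi_rpow_of_lt (by linarith : c - 3 < -1) ha).const_mul (a ^ (-c)))
    (rpow_div_cube_eqOn ha).symm measurableSet_Ioi

lemma integral_Ioi_rpow_div_cube {a c : ℝ} (ha : 0 < a) (hc : c < 2) :
    ∫ r in Ioi a, (r / a) ^ c / r ^ 3 = (a ^ 2 * (2 - c))⁻¹ := by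
  rw [setIntegral_congr_fun measurableSet_Ioi (rpow_div_cube_eqOn ha), integral_const_mul,
    integral_Ioi_rpow_of_lt (by linarith) ha, show c - 3 + 1 = -(2 - c) by ring,
    neg_div_neg_eq, ← mul_div_assoc, ← rpow_add ha, show -c + -(2 - c) = -2 by ring,
    rpow_neg ha.le, rpow_two, div_eq_mul_inv, mul_inv]

lemma tail_integral_div_mem_Icc {a ε : ℝ} {k : ℕ} (ha : 0 < a) (hε : 0 < ε)
    (hk : (k : ℝ) < log (a / ε)) :
    (∫ r in Ioi a, log (r / ε) ^ k / r ^ 3) / ((2 * a ^ 2)⁻¹ * log (a / ε) ^ k) ∈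
      Icc 1 (2 / (2 - k / log (a / ε))) := by
  set L := log (a / ε)
  have hL : 0 < L := (Nat.cast_nonneg k).trans_lt hk
  have hc : (k : ℝ) / L < 2 := ((div_lt_one hL).2 hk).trans one_lt_two
  have hlower : ∀ r ∈ Ioi a, L ^ k * ((r / a) ^ (0 : ℝ) / r ^ 3) ≤ log (r / ε) ^ k / r ^ 3 := by
    intro r (hr : a < r)
    have hr0 : 0 < r := ha.trans hr
    have hLr : L ≤ log (r / ε) := log_le_log (by positivity) (by gcongr)
    rw [rpow_zero, ← mul_div_assoc, mul_one]
    exact div_le_div_of_nonneg_right (pow_le_pow_left₀ hL.le hLr k) (by positivity)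
  have hupper : ∀ r ∈ Ioi a,
      log (r / ε) ^ k / r ^ 3 ≤ L ^ k * ((r / a) ^ ((k : ℝ) / L) / r ^ 3) := by
    intro r (hr : a < r)
    have hr0 : 0 < r := ha.trans hr
    rw [← mul_div_assoc]
    exact div_le_div_of_nonneg_right (log_div_pow_le_mul_rpow ha hr.le hε hL k) (by positivity)
  have hint : IntegrableOn (fun r => log (r / ε) ^ k / r ^ 3) (Ioi a) := by
    refine ((integrableOn_Ioi_rpow_div_cube ha hc).const_mul (L ^ k)).mono'
      (by fun_prop : Measurable fun r : ℝ => log (r / ε) ^ k / r ^ 3).aestronglyMeasurable ?_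
    filter_upwards [ae_restrict_mem measurableSet_Ioi] with r (hr : a < r)
    have hr0 : 0 < r := ha.trans hr
    have : 0 ≤ log (r / ε) := hL.le.trans (log_le_log (by positivity) (by gcongr))
    rw [norm_of_nonneg (by positivity)]
    exact hupper r hr
  have hI_ge := setIntegral_mono_on
    ((integrableOn_Ioi_rpow_div_cube ha two_pos).const_mul (L ^ k)) hint measurableSet_Ioi hlower
  have hI_le := setIntegral_mono_on hint
    ((integrableOn_Ioi_rpow_div_cube ha hc).const_mul (L ^ k))
    measurableSet_Ioi hupper
  rw [integral_const_mul, integral_Ioi_rpow_div_cube ha two_pos, sub_zero] at hI_ge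
  rw [integral_const_mul, integral_Ioi_rpow_div_cube ha hc] at hI_le
  have hden : 0 < (2 * a ^ 2)⁻¹ * L ^ k := by positivity
  have hc2 : 0 < 2 - (k : ℝ) / L := by linarith
  constructor
  · rw [le_div_iff₀ hden]
    convert hI_ge using 1
    ring
  · rw [div_le_div_iff₀ hden hc2]
    calc _ ≤ L ^ k * (a ^ 2 * (2 - k / L))⁻¹ * (2 - k / L) := by gcongr
      _ = 2 * ((2 * a ^ 2)⁻¹ * L ^ k) := by
        rw [mul_inv, ← mul_assoc, inv_mul_cancel_right₀ hc2.ne']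
        ring

theorem tail_integral_asymptotics_general (f : ℝ → ℝ) (hf : MemF f) (p : ℕ) :
    Tendsto (fun ε : ℝ =>
        (∫ r in Set.Ioi (f ε), Real.log (r / ε) ^ (p - 2) / r ^ 3) /
          ((2 * f ε ^ 2)⁻¹ * Real.log (f ε / ε) ^ (p - 2)))
      (nhdsWithin 0 (Set.Ioi 0)) (nhds 1) := by
  obtain ⟨hpos, -, hdiv⟩ := hf
  have hlog : Tendsto (fun ε => log (f ε / ε)) (𝓝[>] 0) atTop := tendsto_log_atTop.comp hdiv
  have hupper : Tendsto (fun ε => 2 / (2 - ((p - 2 : ℕ) : ℝ) / log (f ε / ε))) (𝓝[>] 0) (𝓝 1) := by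
    have h2 := tendsto_const_nhds (x := (2 : ℝ)) (f := 𝓝[>] (0 : ℝ))
    have h0 := (tendsto_const_nhds (x := ((p - 2 : ℕ) : ℝ))).div_atTop hlog
    have := h2.div (h2.sub h0) (by norm_num)
    rwa [sub_zero, div_self two_ne_zero] at this
  have hbounds := (hlog.eventually_gt_atTop ((p - 2 : ℕ) : ℝ)).and self_mem_nhdsWithin |>.mono
    fun ε ⟨hk, (hε : 0 < ε)⟩ => tail_integral_div_mem_Icc (hpos ε hε) hε hk
  exact tendsto_of_tendsto_of_tendsto_of_le_of_le' tendsto_const_nhds hupper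
    (hbounds.mono fun _ h => h.1) (hbounds.mono fun _ h => h.2)

/-- for `f ∈ 𝓕` and `p ≥ 2`,
`∫_{f(ε)}^∞ r^{−3} (log(r/ε))^{p−2} dr ∼ (2 f(ε)²)^{−1} (log(f(ε)/ε))^{p−2}` as `ε → 0`. -/
theorem tail_integral_asymptotics (f : ℝ → ℝ) (hf : MemF f) (p : ℕ) (hp : 2 ≤ p) :
    Tendsto (fun ε : ℝ =>
        (∫ r in Set.Ioi (f ε), Real.log (r / ε) ^ (p - 2) / r ^ 3) /
          ((2 * f ε ^ 2)⁻¹ * Real.log (f ε / ε) ^ (p - 2)))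
      (nhdsWithin 0 (Set.Ioi 0)) (nhds 1) :=
  tail_integral_asymptotics_general f hf p
end
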